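/- arXiv:2505.02023 — 6 statements merged into one kernel-verified Lean document; each statement's English description precedes it below -/
import Mathlib

section
/- Let B be an n×n Hermitian positive definite complex matrix with B̂ = D_B^{-1/2} B D_B^{-1/2} its diagonal normalization (D_B the diagonal matrix of diagonal entries of B). Then Γ(B) := tr(B̂^{-1}) − n ≥ 0, with equality Γ(B) = 0 if and only if B is a diagonal matrix. -/
/-!
Writing `A = B̂`, which is positive definite with unit diagonal, so that `tr A = n`, one has
`Γ(B) = tr (A + A⁻¹ - 2) = tr ((A - 1)ᴴ A⁻¹ (A - 1))`, the trace of a positive semidefinite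
matrix. As `A⁻¹` is positive definite, it vanishes exactly when `A = 1`, i.e. when all
off-diagonal entries `B i j / √(B i i B j j)` vanish.
-/

open Matrix
open scoped ComplexOrder

noncomputable section

/-- `D_B^{1/2}`: the diagonal matrix whose entries are the square roots of the
diagonal entries of `B`. -/
def sqrtDiag {n : ℕ} (B : Matrix (Fin n) (Fin n) ℂ) : Matrix (Fin n) (Fin n) ℂ :=
  Matrix.diagonal fun i => (Real.sqrt (B i i).re : ℂ)

/-- The diagonal normalization `B̂ = D_B^{-1/2} B D_B^{-1/2}`. -/
def hatM {n : ℕ} (B : Matrix (Fin n) (Fin n) ℂ) : Matrix (Fin n) (Fin n) ℂ :=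
  (sqrtDiag B)⁻¹ * B * (sqrtDiag B)⁻¹

/-- The potential function `Γ(B) = tr(B̂⁻¹) − n` (a real number for Hermitian
positive definite `B`). -/
def Gamma {n : ℕ} (B : Matrix (Fin n) (Fin n) ℂ) : ℝ :=
  (Matrix.trace ((hatM B)⁻¹)).re - n

namespace Matrix

variable {ι : Type*} [Fintype ι]

lemma trace_add_inv_sub_two_of_diag_eq_one {R : Type*} [CommRing R] [DecidableEq ι]
    {A : Matrix ι ι R} (hdiag : ∀ i, A i i = 1) :
    trace (A + A⁻¹ - 2) = trace A⁻¹ - Fintype.card ι := by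
  have htrace : trace A = Fintype.card ι := by simp [trace, hdiag]
  rw [← one_add_one_eq_two, trace_sub, trace_add, trace_add, htrace, trace_one]
  ring

lemma PosDef.conjTranspose_mul_mul_same_eq_zero_iff {R m : Type*} [Fintype m] [CommRing R]
    [PartialOrder R] [StarRing R] {P : Matrix ι ι R} (hP : P.PosDef) {M : Matrix ι m R} :
    Mᴴ * P * M = 0 ↔ M = 0 := by
  refine ⟨fun h => ?_, fun h => by simp [h]⟩
  classical
  refine ext_of_mulVec_single fun j => ?_
  rw [zero_mulVec]
  by_contra hv
  have hpos := hP.dotProduct_mulVec_pos hv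
  rw [star_mulVec, dotProduct_mulVec, vecMul_vecMul, ← dotProduct_mulVec, mulVec_mulVec, h,
    zero_mulVec, dotProduct_zero] at hpos
  exact hpos.false

variable {𝕜 : Type*} [RCLike 𝕜] {A : Matrix ι ι 𝕜}

lemma PosSemidef.re_trace_nonneg (hA : A.PosSemidef) : 0 ≤ RCLike.re A.trace :=
  (RCLike.nonneg_iff.mp hA.trace_nonneg).1

lemma PosSemidef.re_trace_eq_zero_iff (hA : A.PosSemidef) : RCLike.re A.trace = 0 ↔ A = 0 := by
  have him : RCLike.im A.trace = 0 := (RCLike.nonneg_iff.mp hA.trace_nonneg).2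
  rw [← hA.trace_eq_zero_iff, RCLike.ext_iff (z := A.trace)]
  simp [him]

variable [DecidableEq ι]

lemma PosDef.add_inv_sub_two_eq (hA : A.PosDef) :
    A + A⁻¹ - 2 = (A - 1)ᴴ * A⁻¹ * (A - 1) := by
  have hdet : IsUnit A.det := (isUnit_iff_isUnit_det A).mp hA.isUnit
  rw [conjTranspose_sub, hA.isHermitian.eq, conjTranspose_one, ← one_add_one_eq_two]
  simp only [sub_mul, mul_sub, mul_nonsing_inv _ hdet, nonsing_inv_mul _ hdet, one_mul, mul_one]
  abel

lemma PosDef.posSemidef_add_inv_sub_two (hA : A.PosDef) : (A + A⁻¹ - 2).PosSemidef := by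
  rw [hA.add_inv_sub_two_eq]
  exact hA.inv.posSemidef.conjTranspose_mul_mul_same _

lemma PosDef.add_inv_sub_two_eq_zero_iff (hA : A.PosDef) : A + A⁻¹ - 2 = 0 ↔ A = 1 := by
  rw [hA.add_inv_sub_two_eq, hA.inv.conjTranspose_mul_mul_same_eq_zero_iff, sub_eq_zero]

end Matrix

variable {n : ℕ} {B : Matrix (Fin n) (Fin n) ℂ}

lemma ofReal_sqrt_re_ne_zero {z : ℂ} (hz : 0 < z.re) : (√z.re : ℂ) ≠ 0 :=
  Complex.ofReal_ne_zero.mpr (Real.sqrt_ne_zero'.mpr hz)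

lemma sqrtDiag_conjTranspose : (sqrtDiag B)ᴴ = sqrtDiag B := by
  simp [sqrtDiag, diagonal_conjTranspose, Pi.star_def]

lemma inv_sqrtDiag (hdiag : ∀ i, 0 < (B i i).re) :
    (sqrtDiag B)⁻¹ = diagonal fun i => ((√(B i i).re : ℂ))⁻¹ := by
  refine inv_eq_right_inv ?_
  rw [sqrtDiag, diagonal_mul_diagonal, ← diagonal_one]
  congr 1
  ext i
  exact mul_inv_cancel₀ (ofReal_sqrt_re_ne_zero (hdiag i))

lemma hatM_apply (hdiag : ∀ i, 0 < (B i i).re) (i j : Fin n) :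
    hatM B i j = B i j / (√(B i i).re * √(B j j).re) := by
  rw [hatM, inv_sqrtDiag hdiag, mul_diagonal, diagonal_mul]
  ring

lemma hatM_apply_self (hdiag : ∀ i, 0 < B i i) (i : Fin n) : hatM B i i = 1 := by
  have hre j : 0 < (B j j).re := (Complex.pos_iff.mp (hdiag j)).1
  have hreal : ((B i i).re : ℂ) = B i i :=
    Complex.ext rfl (by simpa using (Complex.pos_iff.mp (hdiag i)).2)
  rw [hatM_apply hre, ← Complex.ofReal_mul, Real.mul_self_sqrt (hre i).le, hreal,
    div_self (hdiag i).ne']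

lemma hatM_eq_one_iff (hdiag : ∀ i, 0 < B i i) : hatM B = 1 ↔ B.IsDiag := by
  have hre i : 0 < (B i i).re := (Complex.pos_iff.mp (hdiag i)).1
  constructor
  · intro h i j hij
    have hij' := congrFun₂ h i j
    rw [hatM_apply hre, one_apply_ne hij, div_eq_zero_iff] at hij'
    exact hij'.resolve_right
      (mul_ne_zero (ofReal_sqrt_re_ne_zero (hre i)) (ofReal_sqrt_re_ne_zero (hre j)))
  · intro h
    ext i j
    rcases eq_or_ne i j with rfl | hij
    · rw [hatM_apply_self hdiag, one_apply_eq]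
    · rw [hatM_apply hre, h hij, one_apply_ne hij, zero_div]

lemma posDef_hatM (hB : B.PosDef) : (hatM B).PosDef := by
  have hunit : IsUnit (sqrtDiag B)⁻¹ := by
    rw [isUnit_nonsing_inv_iff, sqrtDiag, isUnit_diagonal, Pi.isUnit_iff]
    exact fun i => isUnit_iff_ne_zero.mpr
      (ofReal_sqrt_re_ne_zero (Complex.pos_iff.mp hB.diag_pos).1)
  have h := (IsUnit.posDef_star_left_conjugate_iff hunit).mpr hB
  rwa [star_eq_conjTranspose, conjTranspose_nonsing_inv, sqrtDiag_conjTranspose] at h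

/-- For an `n × n` Hermitian positive definite complex matrix `B`,
`Γ(B) = tr(B̂⁻¹) − n ≥ 0`, with `Γ(B) = 0` if and only if `B` is diagonal. -/
theorem gamma_nonneg_and_eq_zero_iff_isDiag {n : ℕ} (B : Matrix (Fin n) (Fin n) ℂ)
    (hB : B.PosDef) :
    0 ≤ Gamma B ∧ (Gamma B = 0 ↔ B.IsDiag) := by
  have hdiag : ∀ i, 0 < B i i := fun _ => hB.diag_pos
  have hA := posDef_hatM hB
  have hGamma : Gamma B = RCLike.re (trace (hatM B + (hatM B)⁻¹ - 2)) := by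
    simp [Gamma, trace_add_inv_sub_two_of_diag_eq_one (hatM_apply_self hdiag)]
  have hpsd := hA.posSemidef_add_inv_sub_two
  refine ⟨hGamma ▸ hpsd.re_trace_nonneg, ?_⟩
  rw [hGamma, hpsd.re_trace_eq_zero_iff, hA.add_inv_sub_two_eq_zero_iff, hatM_eq_one_iff hdiag]
end
end

section
/- Fix an invertible matrix B ∈ ℂ^{n×n} with nonzero diagonal entries, let J ⊆ [n] be a subset of indices of size k, and let S ∈ ℂ^{k×k} be any nonsingular matrix such that S* B_{JJ} S is diagonal, where B_{JJ} is the principal submatrix of B on the rows and columns indexed by J. Let σ be a permutation of [n] mapping J onto {1,…,k} (preserving the order of J), P_σ the associated permutation matrix, and T = P_σ [[S^{-1},0],[0,I]] P_σ*. Then Γ((T^{-1})* B T^{-1}) = Γ(B) + Σ_{i,j∈J, i≠j} b_{ij}·(B^{-1})_{ji}, where Γ(M) := tr(M ⊙ M^{-1}) − n = −Σ_{i≠j} m_{ij}(M^{-1})_{ji}. -/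
open Matrix
open scoped ComplexOrder

noncomputable section


/-- The set of pivot sets: size-`k` subsets of `[n]`. -/
abbrev PivotSet (n k : ℕ) := {J : Finset (Fin n) // J.card = k}

/-- `B_{JJ}`: the `k × k` principal submatrix of `B` on the rows and columns indexed by `J`
(listed in increasing order). -/
def subJ {n k : ℕ} (J : Finset (Fin n)) (hJ : J.card = k) (B : Matrix (Fin n) (Fin n) ℂ) :
    Matrix (Fin k) (Fin k) ℂ :=
  B.submatrix (fun a => ((J.orderIsoOfFin hJ) a).val) (fun a => ((J.orderIsoOfFin hJ) a).val)

/-- The `n × n` matrix which is `S` on the `J × J` block (after the order-preserving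
identification of `J` with `{1, …, k}`) and agrees with the identity elsewhere; this is
`P_σ* [[S, 0], [0, I]] P_σ` for the order-preserving permutation `σ` with `σ(J) = [k]`. -/
def embedJ {n k : ℕ} (J : Finset (Fin n)) (hJ : J.card = k) (S : Matrix (Fin k) (Fin k) ℂ) :
    Matrix (Fin n) (Fin n) ℂ :=
  Matrix.of fun a b =>
    if ha : a ∈ J then
      if hb : b ∈ J then
        S ((J.orderIsoOfFin hJ).symm ⟨a, ha⟩) ((J.orderIsoOfFin hJ).symm ⟨b, hb⟩)
      else 0
    else if a = b then 1 else 0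

/-- The potential function for general invertible matrices,
`Γ(M) = tr(M ⊙ M⁻¹) − n = −Σ_{i ≠ j} m_{ij}·(M⁻¹)_{ji}` (a complex number in general). -/
def GammaC {n : ℕ} (M : Matrix (Fin n) (Fin n) ℂ) : ℂ :=
  Matrix.trace (Matrix.hadamard M M⁻¹) - n

namespace AuxPivot

variable {n k : ℕ} (J : Finset (Fin n)) (hJ : J.card = k)

lemma symm_coe (a : Fin k) (h : (((J.orderIsoOfFin hJ) a : Fin n)) ∈ J) :
    (J.orderIsoOfFin hJ).symm ⟨((J.orderIsoOfFin hJ) a : Fin n), h⟩ = a := by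
  rw [Subtype.coe_eta]
  exact OrderIso.symm_apply_apply _ _

lemma sumJ' (f : Fin n → ℂ) :
    ∑ i ∈ J, f i = ∑ a : Fin k, f ((J.orderIsoOfFin hJ) a) := by
  rw [← Finset.sum_attach J f]
  exact (Fintype.sum_equiv (J.orderIsoOfFin hJ).toEquiv
    (fun a => f ((J.orderIsoOfFin hJ) a)) (fun x => f x) (fun a => rfl)).symm

lemma sumJ (f : Fin n → ℂ) (h : ∀ c ∉ J, f c = 0) :
    ∑ c, f c = ∑ a : Fin k, f ((J.orderIsoOfFin hJ) a) := by
  rw [← sumJ' J hJ]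
  exact (Finset.sum_subset (Finset.subset_univ J) (fun x _ hx => h x hx)).symm

lemma embedJ_apply_mem' (S : Matrix (Fin k) (Fin k) ℂ) {a b : Fin n}
    (ha : a ∈ J) (hb : b ∈ J) :
    embedJ J hJ S a b
      = S ((J.orderIsoOfFin hJ).symm ⟨a, ha⟩) ((J.orderIsoOfFin hJ).symm ⟨b, hb⟩) := by
  simp [embedJ, ha, hb]

lemma embedJ_apply_mem (S : Matrix (Fin k) (Fin k) ℂ) (a b : Fin k) :
    embedJ J hJ S ((J.orderIsoOfFin hJ) a) ((J.orderIsoOfFin hJ) b) = S a b := by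
  rw [embedJ_apply_mem' J hJ S ((J.orderIsoOfFin hJ) a).2 ((J.orderIsoOfFin hJ) b).2,
    symm_coe, symm_coe]

lemma embedJ_apply_zero (S : Matrix (Fin k) (Fin k) ℂ) {a b : Fin n}
    (ha : a ∈ J) (hb : b ∉ J) : embedJ J hJ S a b = 0 := by
  simp [embedJ, ha, hb]

lemma embedJ_apply_not_mem_left (S : Matrix (Fin k) (Fin k) ℂ) {a : Fin n}
    (ha : a ∉ J) (b : Fin n) : embedJ J hJ S a b = if a = b then 1 else 0 := by
  simp [embedJ, ha]

lemma embedJ_apply_zero' (S : Matrix (Fin k) (Fin k) ℂ) {a b : Fin n}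
    (ha : a ∉ J) (hb : b ∈ J) : embedJ J hJ S a b = 0 := by
  rw [embedJ_apply_not_mem_left J hJ S ha, if_neg]
  rintro rfl; exact ha hb

lemma embedJ_apply_not_mem_right (S : Matrix (Fin k) (Fin k) ℂ) {b : Fin n}
    (hb : b ∉ J) (a : Fin n) : embedJ J hJ S a b = if a = b then 1 else 0 := by
  by_cases ha : a ∈ J
  · rw [embedJ_apply_zero J hJ S ha hb, if_neg]
    rintro rfl; exact hb ha
  · exact embedJ_apply_not_mem_left J hJ S ha b

lemma embedJ_one : embedJ J hJ (1 : Matrix (Fin k) (Fin k) ℂ) = 1 := by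
  funext a b
  by_cases ha : a ∈ J
  · by_cases hb : b ∈ J
    · rw [embedJ_apply_mem' J hJ _ ha hb, Matrix.one_apply, Matrix.one_apply]
      simp [Subtype.ext_iff]
    · rw [embedJ_apply_zero J hJ _ ha hb, Matrix.one_apply, if_neg]
      rintro rfl; exact hb ha
  · rw [embedJ_apply_not_mem_left J hJ _ ha, Matrix.one_apply]

lemma embedJ_mul (S T : Matrix (Fin k) (Fin k) ℂ) :
    embedJ J hJ S * embedJ J hJ T = embedJ J hJ (S * T) := by
  funext a b
  rw [Matrix.mul_apply]
  by_cases ha : a ∈ J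
  · by_cases hb : b ∈ J
    · rw [sumJ J hJ _ (fun c hc => by rw [embedJ_apply_zero J hJ S ha hc, zero_mul])]
      rw [embedJ_apply_mem' J hJ _ ha hb, Matrix.mul_apply]
      apply Finset.sum_congr rfl
      intro c _
      rw [embedJ_apply_mem' J hJ S ha ((J.orderIsoOfFin hJ) c).2,
        embedJ_apply_mem' J hJ T ((J.orderIsoOfFin hJ) c).2 hb,
        symm_coe J hJ c]
    · rw [embedJ_apply_zero J hJ _ ha hb]
      apply Finset.sum_eq_zero
      intro c _
      by_cases hc : c ∈ J
      · rw [embedJ_apply_zero J hJ T hc hb, mul_zero]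
      · rw [embedJ_apply_zero J hJ S ha hc, zero_mul]
  · simp only [embedJ_apply_not_mem_left J hJ _ ha, ite_mul, one_mul, zero_mul]
    rw [Finset.sum_ite_eq, if_pos (Finset.mem_univ a)]
    by_cases hb : b ∈ J
    · rw [embedJ_apply_zero' J hJ T ha hb, if_neg]
      rintro rfl; exact ha hb
    · rw [embedJ_apply_not_mem_left J hJ T ha]

lemma embedJ_conjTranspose (S : Matrix (Fin k) (Fin k) ℂ) :
    (embedJ J hJ S)ᴴ = embedJ J hJ Sᴴ := by
  funext a b
  rw [Matrix.conjTranspose_apply]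
  by_cases ha : a ∈ J
  · by_cases hb : b ∈ J
    · rw [embedJ_apply_mem' J hJ S hb ha, embedJ_apply_mem' J hJ Sᴴ ha hb,
        Matrix.conjTranspose_apply]
    · rw [embedJ_apply_zero' J hJ S hb ha, embedJ_apply_zero J hJ Sᴴ ha hb, star_zero]
  · by_cases hb : b ∈ J
    · rw [embedJ_apply_zero J hJ S hb ha, embedJ_apply_zero' J hJ Sᴴ ha hb, star_zero]
    · rw [embedJ_apply_not_mem_left J hJ S hb, embedJ_apply_not_mem_left J hJ Sᴴ ha]
      by_cases h : a = b
      · subst h; simp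
      · rw [if_neg (fun hh => h hh.symm), if_neg h, star_zero]

lemma embed_conj_block (X Y : Matrix (Fin k) (Fin k) ℂ) (C : Matrix (Fin n) (Fin n) ℂ)
    (a b : Fin k) :
    (embedJ J hJ X * C * embedJ J hJ Y) ((J.orderIsoOfFin hJ) a) ((J.orderIsoOfFin hJ) b)
      = (X * subJ J hJ C * Y) a b := by
  rw [Matrix.mul_apply,
    sumJ J hJ _ (fun d hd => by
      rw [embedJ_apply_zero' J hJ Y hd ((J.orderIsoOfFin hJ) b).2, mul_zero]),
    Matrix.mul_apply]
  apply Finset.sum_congr rfl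
  intro e _
  rw [embedJ_apply_mem J hJ Y]
  congr 1
  rw [Matrix.mul_apply,
    sumJ J hJ _ (fun c hc => by
      rw [embedJ_apply_zero J hJ X ((J.orderIsoOfFin hJ) a).2 hc, zero_mul]),
    Matrix.mul_apply]
  apply Finset.sum_congr rfl
  intro f _
  rw [embedJ_apply_mem J hJ X]
  rfl

lemma embed_conj_out (X Y : Matrix (Fin k) (Fin k) ℂ) (C : Matrix (Fin n) (Fin n) ℂ)
    {i : Fin n} (hi : i ∉ J) :
    (embedJ J hJ X * C * embedJ J hJ Y) i i = C i i := by
  rw [Matrix.mul_apply]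
  simp only [embedJ_apply_not_mem_right J hJ Y hi, mul_ite, mul_one, mul_zero]
  rw [Finset.sum_ite_eq', if_pos (Finset.mem_univ i), Matrix.mul_apply]
  simp only [embedJ_apply_not_mem_left J hJ X hi, ite_mul, one_mul, zero_mul]
  rw [Finset.sum_ite_eq, if_pos (Finset.mem_univ i)]

end AuxPivot

/-- deterministic update formula: if `S* B_{JJ} S` is diagonal and
`T` is `S⁻¹` on the `J × J` block and the identity elsewhere, then
`Γ((T⁻¹)* B T⁻¹) = Γ(B) + Σ_{i,j ∈ J, i ≠ j} b_{ij}·(B⁻¹)_{ji}`. -/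
theorem gamma_pivot_update {n k : ℕ} (B : Matrix (Fin n) (Fin n) ℂ)
    (hB : IsUnit B.det) (hBdiag : ∀ i, B i i ≠ 0)
    (J : Finset (Fin n)) (hJ : J.card = k)
    (S : Matrix (Fin k) (Fin k) ℂ) (hS : IsUnit S.det)
    (hdiag : (Sᴴ * subJ J hJ B * S).IsDiag) :
    GammaC (((embedJ J hJ S⁻¹)⁻¹)ᴴ * B * (embedJ J hJ S⁻¹)⁻¹) =
      GammaC B + ∑ i ∈ J, ∑ j ∈ J, if i ≠ j then B i j * B⁻¹ j i else 0 := by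
  classical
  have hSS : S * S⁻¹ = 1 := Matrix.mul_nonsing_inv _ hS
  have hSH : (S⁻¹)ᴴ * Sᴴ = 1 := by
    rw [← Matrix.conjTranspose_mul, hSS, Matrix.conjTranspose_one]
  have hEF : embedJ J hJ S * embedJ J hJ S⁻¹ = 1 := by
    rw [AuxPivot.embedJ_mul, hSS, AuxPivot.embedJ_one]
  have hFE : embedJ J hJ S⁻¹ * embedJ J hJ S = 1 := by
    rw [AuxPivot.embedJ_mul, Matrix.nonsing_inv_mul _ hS, AuxPivot.embedJ_one]
  have hFinv : (embedJ J hJ S⁻¹)⁻¹ = embedJ J hJ S := Matrix.inv_eq_left_inv hEF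
  have hEinv : (embedJ J hJ S)⁻¹ = embedJ J hJ S⁻¹ := Matrix.inv_eq_left_inv hFE
  have hEH : (embedJ J hJ S)ᴴ = embedJ J hJ Sᴴ := AuxPivot.embedJ_conjTranspose J hJ S
  have hFH : (embedJ J hJ S⁻¹)ᴴ = embedJ J hJ (S⁻¹)ᴴ :=
    AuxPivot.embedJ_conjTranspose J hJ S⁻¹
  have hEHinv : ((embedJ J hJ S)ᴴ)⁻¹ = embedJ J hJ (S⁻¹)ᴴ := by
    rw [← hFH]
    exact Matrix.inv_eq_left_inv (by rw [← Matrix.conjTranspose_mul, hEF,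
      Matrix.conjTranspose_one])
  have hMinv : ((embedJ J hJ S)ᴴ * B * embedJ J hJ S)⁻¹
      = embedJ J hJ S⁻¹ * B⁻¹ * embedJ J hJ (S⁻¹)ᴴ := by
    rw [Matrix.mul_inv_rev, Matrix.mul_inv_rev, hEinv, hEHinv]
    exact (Matrix.mul_assoc _ _ _).symm
  have trp : ∀ M N : Matrix (Fin n) (Fin n) ℂ,
      Matrix.trace (Matrix.hadamard M N) = ∑ i, M i i * N i i := by
    intro M N
    simp [Matrix.trace, Matrix.diag, Matrix.hadamard]
  -- the main sum computation
  have hsum : ∑ i, ((embedJ J hJ S)ᴴ * B * embedJ J hJ S) i i *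
      (embedJ J hJ S⁻¹ * B⁻¹ * embedJ J hJ (S⁻¹)ᴴ) i i
      = (∑ i ∈ J, ∑ j ∈ J, B i j * B⁻¹ j i) + ∑ i ∈ Jᶜ, B i i * B⁻¹ i i := by
    rw [← Finset.sum_add_sum_compl J]
    congr 1
    · -- sum over J
      rw [AuxPivot.sumJ' J hJ]
      have key : ∀ a : Fin k,
          ((embedJ J hJ S)ᴴ * B * embedJ J hJ S) ((J.orderIsoOfFin hJ) a)
              ((J.orderIsoOfFin hJ) a) *
            (embedJ J hJ S⁻¹ * B⁻¹ * embedJ J hJ (S⁻¹)ᴴ) ((J.orderIsoOfFin hJ) a)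
              ((J.orderIsoOfFin hJ) a)
          = (Sᴴ * subJ J hJ B * S) a a * (S⁻¹ * subJ J hJ B⁻¹ * (S⁻¹)ᴴ) a a := by
        intro a
        rw [hEH, AuxPivot.embed_conj_block J hJ Sᴴ S B a a,
          AuxPivot.embed_conj_block J hJ S⁻¹ (S⁻¹)ᴴ B⁻¹ a a]
      -- diagonal trick
      have step1 : Matrix.trace ((Sᴴ * subJ J hJ B * S) * (S⁻¹ * subJ J hJ B⁻¹ * (S⁻¹)ᴴ))
          = ∑ a, (Sᴴ * subJ J hJ B * S) a a * (S⁻¹ * subJ J hJ B⁻¹ * (S⁻¹)ᴴ) a a := by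
        rw [Matrix.trace]
        apply Finset.sum_congr rfl
        intro a _
        rw [Matrix.diag_apply, Matrix.mul_apply]
        exact Finset.sum_eq_single a
          (fun b _ hba => by rw [hdiag (fun h => hba h.symm), zero_mul])
          (fun h => absurd (Finset.mem_univ a) h)
      have step2 : Matrix.trace ((Sᴴ * subJ J hJ B * S) * (S⁻¹ * subJ J hJ B⁻¹ * (S⁻¹)ᴴ))
          = Matrix.trace (subJ J hJ B * subJ J hJ B⁻¹) := by
        have collapse : (Sᴴ * subJ J hJ B * S) * (S⁻¹ * subJ J hJ B⁻¹ * (S⁻¹)ᴴ)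
            = Sᴴ * (subJ J hJ B * (subJ J hJ B⁻¹ * (S⁻¹)ᴴ)) := by
          simp only [Matrix.mul_assoc]
          rw [← Matrix.mul_assoc S S⁻¹ (subJ J hJ B⁻¹ * (S⁻¹)ᴴ), hSS, Matrix.one_mul]
        rw [collapse, Matrix.trace_mul_comm, Matrix.mul_assoc, Matrix.mul_assoc, hSH,
          Matrix.mul_one]
      have step3 : Matrix.trace (subJ J hJ B * subJ J hJ B⁻¹)
          = ∑ i ∈ J, ∑ j ∈ J, B i j * B⁻¹ j i := by
        rw [AuxPivot.sumJ' J hJ, Matrix.trace]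
        apply Finset.sum_congr rfl
        intro a _
        rw [AuxPivot.sumJ' J hJ, Matrix.diag_apply, Matrix.mul_apply]
        rfl
      rw [Finset.sum_congr rfl (fun a _ => key a), ← step1, step2, step3]
    · -- sum over Jᶜ
      apply Finset.sum_congr rfl
      intro i hi
      have hi' : i ∉ J := by simpa using hi
      rw [hEH, AuxPivot.embed_conj_out J hJ Sᴴ S B hi',
        AuxPivot.embed_conj_out J hJ S⁻¹ (S⁻¹)ᴴ B⁻¹ hi']
  -- RHS if-sum
  have hRHS : (∑ i ∈ J, ∑ j ∈ J, if i ≠ j then B i j * B⁻¹ j i else 0)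
      = (∑ i ∈ J, ∑ j ∈ J, B i j * B⁻¹ j i) - ∑ i ∈ J, B i i * B⁻¹ i i := by
    rw [← Finset.sum_sub_distrib]
    apply Finset.sum_congr rfl
    intro i hi
    have : ∀ j ∈ J, (if i ≠ j then B i j * B⁻¹ j i else 0)
        = B i j * B⁻¹ j i - (if i = j then B i j * B⁻¹ j i else 0) := by
      intro j _
      by_cases h : i = j
      · subst h; simp
      · simp [h]
    rw [Finset.sum_congr rfl this, Finset.sum_sub_distrib, Finset.sum_ite_eq, if_pos hi]
  have hsplit : (∑ i, B i i * B⁻¹ i i)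
      = ∑ i ∈ J, B i i * B⁻¹ i i + ∑ i ∈ Jᶜ, B i i * B⁻¹ i i :=
    (Finset.sum_add_sum_compl J _).symm
  rw [hFinv]
  simp only [GammaC]
  rw [trp, trp, hMinv, hsum, hRHS, hsplit]
  ring
end
end

section
/- Fix an invertible matrix B ∈ ℂ^{n×n} with nonzero diagonal entries and 2 ≤ k ≤ n. For each size-k subset J ⊆ [n], let S_J ∈ ℂ^{k×k} be a nonsingular matrix with S_J* B_{JJ} S_J diagonal, and let T_J be the corresponding n×n transformation (equal to S_J^{-1} on the J×J block, after permuting J to the first k coordinates, and the identity elsewhere). If J is sampled uniformly at random from all size-k subsets of [n], then E[Γ((T_J^{-1})* B T_J^{-1})] = (1 − k(k−1)/(n(n−1))) · Γ(B). -/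
open Matrix
open scoped ComplexOrder

noncomputable section


section Aux

variable {n k : ℕ} {J : Finset (Fin n)} {hJ : J.card = k}

lemma embedJ_apply_notMem_left {S : Matrix (Fin k) (Fin k) ℂ} {a b : Fin n} (ha : a ∉ J) :
    embedJ J hJ S a b = if a = b then 1 else 0 := by
  simp [embedJ, ha]

lemma embedJ_apply_notMem_right {S : Matrix (Fin k) (Fin k) ℂ} {a b : Fin n} (hb : b ∉ J) :
    embedJ J hJ S a b = if a = b then 1 else 0 := by
  by_cases ha : a ∈ J
  · have hab : a ≠ b := fun h => hb (h ▸ ha)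
    simp [embedJ, ha, hb, hab]
  · simp [embedJ, ha]

lemma embedJ_apply_mem {S : Matrix (Fin k) (Fin k) ℂ} {a b : Fin n} (ha : a ∈ J) (hb : b ∈ J) :
    embedJ J hJ S a b
      = S ((J.orderIsoOfFin hJ).symm ⟨a, ha⟩) ((J.orderIsoOfFin hJ).symm ⟨b, hb⟩) := by
  simp [embedJ, ha, hb]

lemma embedJ_conjTranspose {S : Matrix (Fin k) (Fin k) ℂ} :
    (embedJ J hJ S)ᴴ = embedJ J hJ Sᴴ := by
  ext a b
  by_cases ha : a ∈ J <;> by_cases hb : b ∈ J <;>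
    simp [conjTranspose_apply, embedJ, ha, hb, eq_comm] <;> aesop

lemma sum_J {M : Type*} [AddCommMonoid M] (f : Fin n → M) :
    ∑ a ∈ J, f a = ∑ i : Fin k, f (J.orderIsoOfFin hJ i) := by
  rw [← Finset.sum_coe_sort J f]
  exact (Equiv.sum_comp (J.orderIsoOfFin hJ).toEquiv (fun x => f ↑x)).symm

lemma sum_univ_of_supp {M : Type*} [AddCommMonoid M] (f : Fin n → M)
    (hf : ∀ a, a ∉ J → f a = 0) :
    ∑ a : Fin n, f a = ∑ i : Fin k, f (J.orderIsoOfFin hJ i) := by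
  rw [← sum_J (hJ := hJ)]
  exact (Finset.sum_subset (Finset.subset_univ J) (fun x _ hx => hf x hx)).symm

lemma orderIso_symm_coe (i : Fin k) (h : (J.orderIsoOfFin hJ i : Fin n) ∈ J) :
    (J.orderIsoOfFin hJ).symm ⟨(J.orderIsoOfFin hJ i : Fin n), h⟩ = i :=
  (J.orderIsoOfFin hJ).symm_apply_apply i

lemma embedJ_mul {S S' : Matrix (Fin k) (Fin k) ℂ} :
    embedJ J hJ S * embedJ J hJ S' = embedJ J hJ (S * S') := by
  ext a b
  rw [mul_apply]
  by_cases ha : a ∈ J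
  · by_cases hb : b ∈ J
    · rw [embedJ_apply_mem ha hb, mul_apply]
      rw [sum_univ_of_supp (hJ := hJ)
        (f := fun j => embedJ J hJ S a j * embedJ J hJ S' j b)]
      · apply Finset.sum_congr rfl
        intro c _
        rw [embedJ_apply_mem ha (J.orderIsoOfFin hJ c).2,
          embedJ_apply_mem (J.orderIsoOfFin hJ c).2 hb, orderIso_symm_coe]
      · intro c hc
        rw [embedJ_apply_notMem_right hc]
        have : a ≠ c := fun h => hc (h ▸ ha)
        simp [this]
    · rw [embedJ_apply_notMem_right (S := S * S') hb]
      have hab : a ≠ b := fun h => hb (h ▸ ha)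
      simp only [hab, if_false]
      apply Finset.sum_eq_zero
      intro c _
      by_cases hc : c ∈ J
      · rw [embedJ_apply_notMem_right (S := S') hb]
        have : c ≠ b := fun h => hb (h ▸ hc)
        simp [this]
      · rw [embedJ_apply_notMem_right (S := S) hc]
        have : a ≠ c := fun h => hc (h ▸ ha)
        simp [this]
  · rw [embedJ_apply_notMem_left (S := S * S') ha]
    rw [Finset.sum_eq_single a]
    · rw [embedJ_apply_notMem_left (S := S) ha,
        embedJ_apply_notMem_left (S := S') ha]
      simp
    · intro c _ hc
      rw [embedJ_apply_notMem_left (S := S) ha]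
      simp [(Ne.symm hc : ¬ a = c)]
    · simp

lemma embedJ_one : embedJ J hJ (1 : Matrix (Fin k) (Fin k) ℂ) = 1 := by
  ext a b
  by_cases ha : a ∈ J
  · by_cases hb : b ∈ J
    · rw [embedJ_apply_mem ha hb]
      simp [Matrix.one_apply, Subtype.ext_iff]
    · rw [embedJ_apply_notMem_right hb]
      have : a ≠ b := fun h => hb (h ▸ ha)
      simp [Matrix.one_apply, this]
  · rw [embedJ_apply_notMem_left ha]
    simp [Matrix.one_apply]

lemma embedJ_inv {S : Matrix (Fin k) (Fin k) ℂ} (hS : IsUnit S.det) :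
    (embedJ J hJ S)⁻¹ = embedJ J hJ S⁻¹ := by
  apply Matrix.inv_eq_right_inv
  rw [embedJ_mul, Matrix.mul_nonsing_inv _ hS, embedJ_one]

lemma embedJ_apply_mem_notMem {S : Matrix (Fin k) (Fin k) ℂ} {a b : Fin n}
    (ha : a ∈ J) (hb : b ∉ J) : embedJ J hJ S a b = 0 := by
  simp [embedJ, ha, hb]

lemma mul_embedJ_apply {S : Matrix (Fin k) (Fin k) ℂ} (A : Matrix (Fin n) (Fin n) ℂ)
    {a b : Fin n} (hb : b ∉ J) : (A * embedJ J hJ S) a b = A a b := by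
  rw [mul_apply, Finset.sum_eq_single b]
  · rw [embedJ_apply_notMem_right hb]; simp
  · intro c _ hc
    rw [embedJ_apply_notMem_right hb]
    simp [hc]
  · simp

lemma embedJ_mul_apply {S : Matrix (Fin k) (Fin k) ℂ} (A : Matrix (Fin n) (Fin n) ℂ)
    {a b : Fin n} (ha : a ∉ J) : (embedJ J hJ S * A) a b = A a b := by
  rw [mul_apply, Finset.sum_eq_single a]
  · rw [embedJ_apply_notMem_left ha]; simp
  · intro c _ hc
    rw [embedJ_apply_notMem_left ha]
    simp [(Ne.symm hc : ¬ a = c)]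
  · simp

lemma sandwich_outside {X Y : Matrix (Fin k) (Fin k) ℂ} (A : Matrix (Fin n) (Fin n) ℂ)
    {a b : Fin n} (ha : a ∉ J) (hb : b ∉ J) :
    (embedJ J hJ X * A * embedJ J hJ Y) a b = A a b := by
  rw [mul_embedJ_apply _ hb, embedJ_mul_apply _ ha]

lemma embedJ_mul_apply_mem {X : Matrix (Fin k) (Fin k) ℂ} (A : Matrix (Fin n) (Fin n) ℂ)
    (i : Fin k) (q : Fin n) :
    (embedJ J hJ X * A) (J.orderIsoOfFin hJ i : Fin n) q
      = ∑ p : Fin k, X i p * A (J.orderIsoOfFin hJ p : Fin n) q := by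
  rw [mul_apply, sum_univ_of_supp (hJ := hJ)]
  · apply Finset.sum_congr rfl
    intro p _
    rw [embedJ_apply_mem (J.orderIsoOfFin hJ i).2 (J.orderIsoOfFin hJ p).2,
      orderIso_symm_coe, orderIso_symm_coe]
  · intro c hc
    rw [embedJ_apply_mem_notMem (J.orderIsoOfFin hJ i).2 hc, zero_mul]

lemma mul_embedJ_apply_mem {Y : Matrix (Fin k) (Fin k) ℂ} (A : Matrix (Fin n) (Fin n) ℂ)
    (q : Fin n) (j : Fin k) :
    (A * embedJ J hJ Y) q (J.orderIsoOfFin hJ j : Fin n)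
      = ∑ p : Fin k, A q (J.orderIsoOfFin hJ p : Fin n) * Y p j := by
  rw [mul_apply, sum_univ_of_supp (hJ := hJ)]
  · apply Finset.sum_congr rfl
    intro p _
    rw [embedJ_apply_mem (J.orderIsoOfFin hJ p).2 (J.orderIsoOfFin hJ j).2,
      orderIso_symm_coe, orderIso_symm_coe]
  · intro c hc
    rw [embedJ_apply_notMem_left hc]
    have h2 : c ≠ (J.orderEmbOfFin hJ) j := fun h => hc (h ▸ J.orderEmbOfFin_mem hJ j)
    simp [h2]

lemma sandwich_block {X Y : Matrix (Fin k) (Fin k) ℂ} (A : Matrix (Fin n) (Fin n) ℂ)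
    (i j : Fin k) :
    (embedJ J hJ X * A * embedJ J hJ Y) (J.orderIsoOfFin hJ i : Fin n)
        (J.orderIsoOfFin hJ j : Fin n)
      = (X * A.submatrix (fun a => ((J.orderIsoOfFin hJ) a : Fin n))
          (fun a => ((J.orderIsoOfFin hJ) a : Fin n)) * Y) i j := by
  rw [mul_assoc, embedJ_mul_apply_mem]
  rw [mul_assoc, mul_apply]
  apply Finset.sum_congr rfl
  intro p _
  rw [mul_embedJ_apply_mem, mul_apply]
  simp [submatrix_apply]

lemma diag_trace {D X : Matrix (Fin k) (Fin k) ℂ} (hD : D.IsDiag) :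
    ∑ i, D i i * X i i = (D * X).trace := by
  rw [Matrix.trace]
  apply Finset.sum_congr rfl
  intro i _
  rw [Matrix.diag_apply, mul_apply, Finset.sum_eq_single i]
  · intro c _ hc
    rw [hD (Ne.symm hc), zero_mul]
  · simp

lemma gamma_sandwich {B : Matrix (Fin n) (Fin n) ℂ} (hB : IsUnit B.det)
    {S : Matrix (Fin k) (Fin k) ℂ} (hSu : IsUnit S.det)
    (hdiag : (Sᴴ * (B.submatrix (fun a => ((J.orderIsoOfFin hJ) a : Fin n))
        (fun a => ((J.orderIsoOfFin hJ) a : Fin n))) * S).IsDiag) :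
    GammaC ((embedJ J hJ S)ᴴ * B * embedJ J hJ S)
      = GammaC B + ((∑ a ∈ J, ∑ b ∈ J, B a b * B⁻¹ b a) - ∑ a ∈ J, B a a * B⁻¹ a a) := by
  have hSH : IsUnit Sᴴ.det := by
    rw [Matrix.det_conjTranspose]; exact hSu.star
  set M := (embedJ J hJ S)ᴴ * B * embedJ J hJ S with hMdef
  have hM : M = embedJ J hJ Sᴴ * B * embedJ J hJ S := by
    rw [hMdef, embedJ_conjTranspose]
  have hMinv : M⁻¹ = embedJ J hJ S⁻¹ * B⁻¹ * embedJ J hJ (Sᴴ)⁻¹ := by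
    rw [hMdef, Matrix.mul_inv_rev, Matrix.mul_inv_rev, embedJ_conjTranspose,
      embedJ_inv hSu, embedJ_inv hSH, mul_assoc]
  -- the diagonal difference vanishes off J
  have hout : ∀ a : Fin n, a ∉ J →
      M a a * M⁻¹ a a - B a a * B⁻¹ a a = 0 := by
    intro a ha
    rw [hMinv, hM, sandwich_outside _ ha ha, sandwich_outside _ ha ha, sub_self]
  have hsum : ∑ a : Fin n, (M a a * M⁻¹ a a - B a a * B⁻¹ a a)
      = ∑ i : Fin k, (M ((J.orderIsoOfFin hJ) i : Fin n) ((J.orderIsoOfFin hJ) i : Fin n)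
          * M⁻¹ ((J.orderIsoOfFin hJ) i : Fin n) ((J.orderIsoOfFin hJ) i : Fin n)
          - B ((J.orderIsoOfFin hJ) i : Fin n) ((J.orderIsoOfFin hJ) i : Fin n)
          * B⁻¹ ((J.orderIsoOfFin hJ) i : Fin n) ((J.orderIsoOfFin hJ) i : Fin n)) :=
    sum_univ_of_supp _ hout
  -- identify the block values
  set D := Sᴴ * (B.submatrix (fun a => ((J.orderIsoOfFin hJ) a : Fin n))
      (fun a => ((J.orderIsoOfFin hJ) a : Fin n))) * S with hD
  set X := S⁻¹ * ((B⁻¹).submatrix (fun a => ((J.orderIsoOfFin hJ) a : Fin n))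
      (fun a => ((J.orderIsoOfFin hJ) a : Fin n))) * (Sᴴ)⁻¹ with hX
  have hMblock : ∀ i j : Fin k,
      M ((J.orderIsoOfFin hJ) i : Fin n) ((J.orderIsoOfFin hJ) j : Fin n) = D i j := by
    intro i j; rw [hM]; exact sandwich_block B i j
  have hMinvblock : ∀ i j : Fin k,
      M⁻¹ ((J.orderIsoOfFin hJ) i : Fin n) ((J.orderIsoOfFin hJ) j : Fin n) = X i j := by
    intro i j; rw [hMinv]; exact sandwich_block B⁻¹ i j
  -- trace computation
  have hDX : D * X = Sᴴ * ((B.submatrix (fun a => ((J.orderIsoOfFin hJ) a : Fin n))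
      (fun a => ((J.orderIsoOfFin hJ) a : Fin n)))
      * ((B⁻¹).submatrix (fun a => ((J.orderIsoOfFin hJ) a : Fin n))
      (fun a => ((J.orderIsoOfFin hJ) a : Fin n))) * (Sᴴ)⁻¹) := by
    rw [hD, hX]
    simp only [mul_assoc]
    rw [Matrix.mul_nonsing_inv_cancel_left _ _ hSu]
  have htr : ∑ i : Fin k, D i i * X i i
      = ∑ a ∈ J, ∑ b ∈ J, B a b * B⁻¹ b a := by
    rw [diag_trace hdiag, hDX, ← mul_assoc, ← mul_assoc, Matrix.trace_mul_cycle,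
      ← mul_assoc, Matrix.nonsing_inv_mul _ hSH, one_mul]
    rw [Matrix.trace]
    rw [sum_J (hJ := hJ) (f := fun a => ∑ b ∈ J, B a b * B⁻¹ b a)]
    apply Finset.sum_congr rfl
    intro i _
    rw [Matrix.diag_apply, mul_apply,
      sum_J (hJ := hJ) (f := fun b => B ((J.orderIsoOfFin hJ) i : Fin n) b
        * B⁻¹ b ((J.orderIsoOfFin hJ) i : Fin n))]
    simp [submatrix_apply]
  -- assemble
  have hBdiagsum : ∑ i : Fin k,
      B ((J.orderIsoOfFin hJ) i : Fin n) ((J.orderIsoOfFin hJ) i : Fin n)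
        * B⁻¹ ((J.orderIsoOfFin hJ) i : Fin n) ((J.orderIsoOfFin hJ) i : Fin n)
      = ∑ a ∈ J, B a a * B⁻¹ a a :=
    (sum_J (hJ := hJ) (f := fun a => B a a * B⁻¹ a a)).symm
  have key : ∑ a : Fin n, M a a * M⁻¹ a a
      = ∑ a : Fin n, B a a * B⁻¹ a a
        + ((∑ a ∈ J, ∑ b ∈ J, B a b * B⁻¹ b a) - ∑ a ∈ J, B a a * B⁻¹ a a) := by
    have := hsum
    rw [Finset.sum_sub_distrib, Finset.sum_sub_distrib] at this
    simp only [hMblock, hMinvblock] at this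
    rw [htr, hBdiagsum] at this
    linear_combination this
  have htrace : ∀ (A : Matrix (Fin n) (Fin n) ℂ),
      Matrix.trace (Matrix.hadamard A A⁻¹) = ∑ a : Fin n, A a a * A⁻¹ a a := by
    intro A
    simp [Matrix.trace, Matrix.hadamard]
  rw [GammaC, GammaC, htrace, htrace, key]
  ring

lemma count_pairs (hk : 2 ≤ k) {a b : Fin n} (hab : a ≠ b) :
    (Finset.univ.filter (fun J : PivotSet n k => a ∈ J.1 ∧ b ∈ J.1)).card
      = (n - 2).choose (k - 2) := by
  have hcard2 : ({a, b} : Finset (Fin n)).card = 2 := Finset.card_pair hab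
  have h1 : ((Finset.univ : Finset (Fin n)) \ {a, b}).card = n - 2 := by
    rw [Finset.card_sdiff_of_subset (Finset.subset_univ _), hcard2, Finset.card_univ, Fintype.card_fin]
  rw [← h1, ← Finset.card_powersetCard (k - 2)]
  apply Finset.card_bij' (i := fun (J : PivotSet n k) _ => J.1 \ {a, b})
    (j := fun t ht => (⟨t ∪ {a, b}, by
      rw [Finset.mem_powersetCard] at ht
      have hdisj : Disjoint t ({a, b} : Finset (Fin n)) := by
        rw [Finset.disjoint_right]
        intro x hx
        have := ht.1
        intro hxt
        have := this hxt
        simp only [Finset.mem_sdiff] at this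
        exact this.2 hx
      rw [Finset.card_union_of_disjoint hdisj, ht.2, hcard2, Nat.sub_add_cancel hk]⟩ :
        PivotSet n k))
  case hi =>
    intro J hJ'
    simp only [Finset.mem_filter, Finset.mem_univ, true_and] at hJ'
    rw [Finset.mem_powersetCard]
    constructor
    · intro x hx
      simp only [Finset.mem_sdiff] at hx ⊢
      exact ⟨Finset.mem_univ x, hx.2⟩
    · have hsub : ({a, b} : Finset (Fin n)) ⊆ J.1 := by
        intro x hx
        simp only [Finset.mem_insert, Finset.mem_singleton] at hx
        rcases hx with rfl | rfl
        · exact hJ'.1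
        · exact hJ'.2
      rw [Finset.card_sdiff_of_subset hsub, hcard2, J.2]
  case hj =>
    intro t ht
    simp only [Finset.mem_filter, Finset.mem_univ, true_and]
    constructor
    · exact Finset.mem_union_right _ (by simp)
    · exact Finset.mem_union_right _ (by simp)
  case left_inv =>
    intro J hJ'
    simp only [Finset.mem_filter, Finset.mem_univ, true_and] at hJ'
    apply Subtype.ext
    show J.1 \ {a, b} ∪ {a, b} = J.1
    rw [Finset.sdiff_union_of_subset]
    intro x hx
    simp only [Finset.mem_insert, Finset.mem_singleton] at hx
    rcases hx with rfl | rfl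
    · exact hJ'.1
    · exact hJ'.2
  case right_inv =>
    intro t ht
    rw [Finset.mem_powersetCard] at ht
    show (t ∪ {a, b}) \ {a, b} = t
    rw [Finset.union_sdiff_distrib, Finset.sdiff_self, Finset.union_empty,
      Finset.sdiff_eq_self_iff_disjoint]
    rw [Finset.disjoint_left]
    intro x hx hxt
    have := ht.1 hx
    simp only [Finset.mem_sdiff] at this
    exact this.2 hxt

lemma choose_id (hk : 2 ≤ k) (hkn : k ≤ n) :
    (n - 2).choose (k - 2) * (n * (n - 1)) = n.choose k * (k * (k - 1)) := by
  obtain ⟨k', rfl⟩ := Nat.exists_eq_add_of_le hk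
  obtain ⟨m, rfl⟩ := Nat.exists_eq_add_of_le hkn
  have h1 := Nat.add_one_mul_choose_eq (k' + m) k'
  have h2 := Nat.add_one_mul_choose_eq (k' + m + 1) (k' + 1)
  have e1 : 2 + k' - 2 = k' := by omega
  have e2 : 2 + k' + m - 2 = k' + m := by omega
  have e3 : 2 + k' + m - 1 = k' + m + 1 := by omega
  have e4 : 2 + k' - 1 = k' + 1 := by omega
  rw [e1, e2, e3, e4]
  have e5 : 2 + k' + m = (k' + m + 1) + 1 := by omega
  have e6 : 2 + k' = (k' + 1) + 1 := by omega
  rw [e5, e6]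
  nlinarith [h1, h2]

end Aux

/-- expected update: for a uniformly random size-`k` pivot set `J`,
`E[Γ((T_J⁻¹)* B T_J⁻¹)] = (1 − k(k−1)/(n(n−1)))·Γ(B)`. -/
theorem gamma_expected_pivot_update {n k : ℕ} (hk : 2 ≤ k) (hkn : k ≤ n)
    (B : Matrix (Fin n) (Fin n) ℂ) (hB : IsUnit B.det) (hBdiag : ∀ i, B i i ≠ 0)
    (S : PivotSet n k → Matrix (Fin k) (Fin k) ℂ)
    (hS : ∀ J : PivotSet n k,
      IsUnit (S J).det ∧ ((S J)ᴴ * subJ J.1 J.2 B * (S J)).IsDiag) :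
    (∑ J : PivotSet n k,
        GammaC (((embedJ J.1 J.2 (S J)⁻¹)⁻¹)ᴴ * B * (embedJ J.1 J.2 (S J)⁻¹)⁻¹)) /
        (Fintype.card (PivotSet n k) : ℂ) =
      ((1 - ((k : ℝ) * ((k : ℝ) - 1)) / ((n : ℝ) * ((n : ℝ) - 1)) : ℝ) : ℂ) * GammaC B := by
  classical
  set g : Fin n → Fin n → ℂ := fun a b => B a b * B⁻¹ b a with hg
  have hterm : ∀ J : PivotSet n k,
      GammaC (((embedJ J.1 J.2 (S J)⁻¹)⁻¹)ᴴ * B * (embedJ J.1 J.2 (S J)⁻¹)⁻¹)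
        = GammaC B + ((∑ a ∈ J.1, ∑ b ∈ J.1, g a b) - ∑ a ∈ J.1, g a a) := by
    intro J
    obtain ⟨hSu, hdiag⟩ := hS J
    have hinv : (embedJ J.1 J.2 (S J)⁻¹)⁻¹ = embedJ J.1 J.2 (S J) := by
      rw [embedJ_inv (Matrix.isUnit_nonsing_inv_det _ hSu),
        Matrix.nonsing_inv_nonsing_inv _ hSu]
    rw [hinv]
    exact gamma_sandwich hB hSu hdiag
  rw [Finset.sum_congr rfl (fun J _ => hterm J), Finset.sum_add_distrib,
    Finset.sum_const, Finset.card_univ]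
  -- per-J indicator form
  have hA : ∀ (J : Finset (Fin n)),
      ∑ a : Fin n, ∑ b : Fin n, (if a ∈ J ∧ b ∈ J ∧ b ≠ a then g a b else 0)
        = (∑ a ∈ J, ∑ b ∈ J, g a b) - ∑ a ∈ J, g a a := by
    intro J
    have inner : ∀ a : Fin n,
        (∑ b : Fin n, if a ∈ J ∧ b ∈ J ∧ b ≠ a then g a b else 0)
          = if a ∈ J then ((∑ b ∈ J, g a b) - g a a) else 0 := by
      intro a
      by_cases haJ : a ∈ J
      · simp only [haJ, true_and, if_true]
        have h1 : ∀ b : Fin n, (if b ∈ J ∧ b ≠ a then g a b else 0)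
            = (if b ∈ J then (if b = a then 0 else g a b) else 0) := by
          intro b
          by_cases h1 : b ∈ J <;> by_cases h2 : b = a <;> simp [h1, h2]
        rw [Finset.sum_congr rfl (fun b _ => h1 b), Finset.sum_ite_mem,
          Finset.univ_inter]
        have h2 : ∑ b ∈ J, (if b = a then 0 else g a b)
            = ∑ b ∈ J, (g a b - if b = a then g a b else 0) := by
          apply Finset.sum_congr rfl
          intro b _
          by_cases h : b = a <;> simp [h]
        rw [h2, Finset.sum_sub_distrib, Finset.sum_ite_eq' J a (fun b => g a b),
          if_pos haJ]
      · simp [haJ]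
    rw [Finset.sum_congr rfl (fun a _ => inner a), Finset.sum_ite_mem,
      Finset.univ_inter, Finset.sum_sub_distrib]
  have hrow : ∀ a : Fin n, ∑ b : Fin n, g a b = 1 := by
    intro a
    have : ∑ b : Fin n, g a b = (B * B⁻¹) a a := by
      rw [mul_apply]
    rw [this, Matrix.mul_nonsing_inv _ hB, Matrix.one_apply_eq]
  have hswap : ∑ J : PivotSet n k, ((∑ a ∈ J.1, ∑ b ∈ J.1, g a b) - ∑ a ∈ J.1, g a a)
      = ((n - 2).choose (k - 2) : ℂ) * (- GammaC B) := by
    have e1 : ∑ J : PivotSet n k, ((∑ a ∈ J.1, ∑ b ∈ J.1, g a b) - ∑ a ∈ J.1, g a a)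
        = ∑ a : Fin n, ∑ b : Fin n, ∑ J : PivotSet n k,
            (if a ∈ J.1 ∧ b ∈ J.1 ∧ b ≠ a then g a b else 0) := by
      rw [Finset.sum_congr rfl (fun (J : PivotSet n k) _ => (hA J.1).symm)]
      rw [Finset.sum_comm]
      apply Finset.sum_congr rfl
      intro a _
      rw [Finset.sum_comm]
    rw [e1]
    have e2 : ∀ a b : Fin n,
        (∑ J : PivotSet n k, if a ∈ J.1 ∧ b ∈ J.1 ∧ b ≠ a then g a b else 0)
          = if b ≠ a then ((n - 2).choose (k - 2) : ℂ) * g a b else 0 := by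
      intro a b
      by_cases hba : b = a
      · simp [hba]
      · have hba' : b ≠ a := hba
        rw [if_pos hba']
        have h3 : ∀ J : PivotSet n k, (if a ∈ J.1 ∧ b ∈ J.1 ∧ b ≠ a then g a b else 0)
            = (if a ∈ J.1 ∧ b ∈ J.1 then g a b else 0) := by
          intro J
          by_cases h : a ∈ J.1 ∧ b ∈ J.1 <;> simp [h, hba]
        rw [Finset.sum_congr rfl (fun J _ => h3 J), Finset.sum_ite, Finset.sum_const,
          Finset.sum_const_zero, add_zero, count_pairs hk (Ne.symm hba'),
          nsmul_eq_mul]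
    rw [Finset.sum_congr rfl (fun a _ =>
      Finset.sum_congr rfl (fun b _ => e2 a b))]
    have e3 : ∀ a : Fin n,
        (∑ b : Fin n, if b ≠ a then ((n - 2).choose (k - 2) : ℂ) * g a b else 0)
          = ((n - 2).choose (k - 2) : ℂ) * (1 - g a a) := by
      intro a
      have h4 : ∀ b : Fin n, (if b ≠ a then ((n - 2).choose (k - 2) : ℂ) * g a b else 0)
          = ((n - 2).choose (k - 2) : ℂ) * g a b
            - (if b = a then ((n - 2).choose (k - 2) : ℂ) * g a b else 0) := by
        intro b
        by_cases h : b = a <;> simp [h]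
      rw [Finset.sum_congr rfl (fun b _ => h4 b), Finset.sum_sub_distrib,
        ← Finset.mul_sum, hrow, Finset.sum_ite_eq' Finset.univ a
          (fun b => ((n - 2).choose (k - 2) : ℂ) * g a b), if_pos (Finset.mem_univ a)]
      ring
    rw [Finset.sum_congr rfl (fun a _ => e3 a), ← Finset.mul_sum]
    congr 1
    rw [Finset.sum_sub_distrib, Finset.sum_const, Finset.card_univ, Fintype.card_fin,
      GammaC]
    have : Matrix.trace (Matrix.hadamard B B⁻¹) = ∑ a : Fin n, g a a := by
      simp [Matrix.trace, Matrix.hadamard, hg]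
    rw [this]
    simp only [nsmul_eq_mul, mul_one]
    ring
  rw [hswap]
  -- final arithmetic
  have hcard : (Fintype.card (PivotSet n k) : ℂ) = (n.choose k : ℂ) := by
    rw [Fintype.card_finset_len, Fintype.card_fin]
  rw [hcard, Fintype.card_finset_len, Fintype.card_fin]
  have hNne : ((n.choose k : ℕ) : ℂ) ≠ 0 :=
    Nat.cast_ne_zero.2 (Nat.choose_pos hkn).ne'
  have h2n : 2 ≤ n := le_trans hk hkn
  have hnne : (n : ℂ) ≠ 0 := Nat.cast_ne_zero.2 (by omega)
  have hn1ne : (n : ℂ) - 1 ≠ 0 := by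
    rw [sub_ne_zero]
    intro h
    have : (n : ℕ) = 1 := by exact_mod_cast h
    omega
  have hidC : ((n - 2).choose (k - 2) : ℂ) * ((n : ℂ) * ((n : ℂ) - 1))
      = (n.choose k : ℂ) * ((k : ℂ) * ((k : ℂ) - 1)) := by
    have h := choose_id hk hkn
    have hcast := congrArg (Nat.cast : ℕ → ℂ) h
    push_cast [Nat.cast_sub (show 1 ≤ n by omega), Nat.cast_sub (show 1 ≤ k by omega)]
      at hcast
    convert hcast using 2 <;> push_cast <;> ring
  have hc : ((1 - ((k : ℝ) * ((k : ℝ) - 1)) / ((n : ℝ) * ((n : ℝ) - 1)) : ℝ) : ℂ)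
      = 1 - ((k : ℂ) * ((k : ℂ) - 1)) / ((n : ℂ) * ((n : ℂ) - 1)) := by
    push_cast
    ring
  rw [hc, nsmul_eq_mul]
  field_simp
  ring_nf
  ring_nf at hidC
  linear_combination (-(GammaC B)) * hidC
end
end

section
/- Let B^{(0)} ∈ ℂ^{n×n} be Hermitian positive definite and 2 ≤ k ≤ n. Let J_0, J_1, J_2, … be independent uniformly random size-k subsets of [n], and suppose the matrices B^{(t)} are defined recursively by B^{(t+1)} = (T_t^{-1})* B^{(t)} T_t^{-1}, where T_t is determined by an arbitrary fixed rule assigning to each positive definite matrix B and size-k subset J a nonsingular matrix S(B,J) ∈ ℂ^{k×k} with S(B,J)* B_{JJ} S(B,J) diagonal (T_t being S(B^{(t)},J_t)^{-1} on the J_t×J_t block, after permuting J_t to the first k coordinates, and identity elsewhere). Then for every t ≥ 0, E[Γ(B^{(t)})] = (1 − k(k−1)/(n(n−1)))^t · Γ(B^{(0)}). -/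
open Matrix
open scoped ComplexOrder

noncomputable section

/-!
Write `Γ(B) = Re tr(B ⊙ B⁻¹) - n`. After moving the pivot set `J` to the front, one step is the
congruence `B ↦ Nᴴ B N` with `N = diag(S, I)`, so `B⁻¹ ↦ N⁻¹ B⁻¹ N⁻ᴴ`: outside `J` the diagonals
of `B` and `B⁻¹` do not change, while on `J` the new block of `B` is diagonal, so the `J`-part of
`tr(B ⊙ B⁻¹)` becomes `tr(B_JJ (B⁻¹)_JJ)`, which is invariant under the congruence. Hence one step
adds `Re ∑_{i ≠ j ∈ J} B_ij (B⁻¹)_ji` to `Γ`. Every ordered pair `i ≠ j` lies in `C(n-2, k-2)` of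
the `C(n, k)` pivot sets and `∑_{i ≠ j} B_ij (B⁻¹)_ji = n - tr(B ⊙ B⁻¹) = -Γ(B)`, so averaging over
`J` multiplies `Γ` by `1 - C(n-2, k-2) / C(n, k) = 1 - k(k-1) / (n(n-1))`, and averaging over
independent pivot sequences iterates this factor.
-/

open Finset

namespace Matrix

section Blocks

variable {m o R : Type*} [Fintype m] [Fintype o]

theorem trace_hadamard_eq_add_toBlocks [AddCommMonoid R] [Mul R]
    (X Y : Matrix (m ⊕ o) (m ⊕ o) R) :
    trace (X ⊙ Y) = trace (X.toBlocks₁₁ ⊙ Y.toBlocks₁₁) + trace (X.toBlocks₂₂ ⊙ Y.toBlocks₂₂) :=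
  Fintype.sum_sum_type _

theorem IsDiag.trace_hadamard_eq_trace_mul [NonUnitalNonAssocSemiring R] {D : Matrix m m R}
    (hD : D.IsDiag) (Y : Matrix m m R) : trace (D ⊙ Y) = trace (D * Y) := by
  refine sum_congr rfl fun i _ => ?_
  rw [diag_apply, diag_apply, hadamard_apply, mul_apply,
    sum_eq_single i (fun j _ hji => by rw [hD hji.symm, zero_mul]) (by simp)]

theorem trace_mul_sub_trace_hadamard [NonUnitalNonAssocRing R] [DecidableEq m]
    (X Y : Matrix m m R) :
    trace (X * Y) - trace (X ⊙ Y) = ∑ i, ∑ j, if i = j then 0 else X i j * Y j i := by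
  simp only [trace, diag_apply, mul_apply, hadamard_apply, ← sum_sub_distrib]
  refine sum_congr rfl fun i _ => ?_
  rw [← add_sum_erase _ _ (mem_univ i), add_sub_cancel_left, sum_ite, sum_const_zero, zero_add,
    filter_ne]

variable [DecidableEq o]

theorem fromBlocks_mul_mul_fromBlocks [Semiring R] (A B : Matrix m m R)
    (M : Matrix (m ⊕ o) (m ⊕ o) R) :
    fromBlocks A 0 0 1 * M * fromBlocks B 0 0 1 =
      fromBlocks (A * M.toBlocks₁₁ * B) (A * M.toBlocks₁₂) (M.toBlocks₂₁ * B) M.toBlocks₂₂ := by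
  conv_lhs => rw [← fromBlocks_toBlocks M]
  simp [fromBlocks_multiply]

variable [DecidableEq m] [CommRing R] {S : Matrix m m R}

theorem fromBlocks_one_inv (hS : IsUnit S.det) :
    (fromBlocks S 0 0 1 : Matrix (m ⊕ o) (m ⊕ o) R)⁻¹ = fromBlocks S⁻¹ 0 0 1 :=
  inv_eq_left_inv <| by simp [fromBlocks_multiply, nonsing_inv_mul _ hS]

theorem trace_hadamard_inv_conj_fromBlocks [StarRing R] (M : Matrix (m ⊕ o) (m ⊕ o) R)
    (hS : IsUnit S.det) (hD : (Sᴴ * M.toBlocks₁₁ * S).IsDiag) :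
    trace (((fromBlocks S 0 0 1)ᴴ * M * fromBlocks S 0 0 1) ⊙
        ((fromBlocks S 0 0 1)ᴴ * M * fromBlocks S 0 0 1)⁻¹) =
      trace (M ⊙ M⁻¹) +
        (trace (M.toBlocks₁₁ * M⁻¹.toBlocks₁₁) - trace (M.toBlocks₁₁ ⊙ M⁻¹.toBlocks₁₁)) := by
  have hNH : (fromBlocks S 0 0 1 : Matrix (m ⊕ o) (m ⊕ o) R)ᴴ = fromBlocks Sᴴ 0 0 1 := by
    rw [fromBlocks_conjTranspose, conjTranspose_zero, conjTranspose_zero, conjTranspose_one]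
  have hinv : ((fromBlocks S 0 0 1)ᴴ * M * fromBlocks S 0 0 1)⁻¹ =
      fromBlocks S⁻¹ 0 0 1 * M⁻¹ * fromBlocks S⁻¹ᴴ 0 0 1 := by
    rw [mul_inv_rev, mul_inv_rev, ← conjTranspose_nonsing_inv, fromBlocks_one_inv hS,
      fromBlocks_conjTranspose, ← mul_assoc]
    simp
  have hcancel : trace (Sᴴ * M.toBlocks₁₁ * S * (S⁻¹ * M⁻¹.toBlocks₁₁ * S⁻¹ᴴ)) =
      trace (M.toBlocks₁₁ * M⁻¹.toBlocks₁₁) := by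
    rw [show Sᴴ * M.toBlocks₁₁ * S * (S⁻¹ * M⁻¹.toBlocks₁₁ * S⁻¹ᴴ) =
        Sᴴ * (M.toBlocks₁₁ * (S * S⁻¹) * M⁻¹.toBlocks₁₁ * S⁻¹ᴴ) by simp only [mul_assoc],
      trace_mul_comm, mul_nonsing_inv _ hS, mul_one, mul_assoc, ← conjTranspose_mul,
      mul_nonsing_inv _ hS, conjTranspose_one, mul_one]
  rw [hinv, hNH, fromBlocks_mul_mul_fromBlocks, fromBlocks_mul_mul_fromBlocks,
    trace_hadamard_eq_add_toBlocks, trace_hadamard_eq_add_toBlocks M]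
  simp only [toBlocks_fromBlocks₁₁, toBlocks_fromBlocks₂₂]
  rw [hD.trace_hadamard_eq_trace_mul, hcancel]
  ring

theorem PosDef.conj_fromBlocks [PartialOrder R] [StarRing R] {M : Matrix (m ⊕ o) (m ⊕ o) R}
    (hM : M.PosDef) (hS : IsUnit S.det) :
    ((fromBlocks S 0 0 1)ᴴ * M * fromBlocks S 0 0 1).PosDef :=
  hM.conjTranspose_mul_mul_same <| mulVec_injective_of_isUnit <|
    (isUnit_iff_isUnit_det _).2 <| by rwa [det_fromBlocks_zero₂₁, det_one, mul_one]

end Blocks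

theorem trace_hadamard_inv_submatrix_equiv {m n R : Type*} [Fintype m] [Fintype n]
    [DecidableEq m] [DecidableEq n] [CommRing R] (B : Matrix m m R) (e : n ≃ m) :
    trace (B.submatrix e e ⊙ (B.submatrix e e)⁻¹) = trace (B ⊙ B⁻¹) := by
  rw [inv_submatrix_equiv, ← submatrix_hadamard]
  exact Equiv.sum_comp e fun i => (B ⊙ B⁻¹) i i

end Matrix

theorem Finset.sum_powersetCard_sum_sum {α M : Type*} [Fintype α] [DecidableEq α]
    [AddCommMonoid M] {k : ℕ} (hk : 2 ≤ k) (g : α → α → M) (hg : ∀ i, g i i = 0) :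
    ∑ J ∈ powersetCard k univ, ∑ i ∈ J, ∑ j ∈ J, g i j =
      (Fintype.card α - 2).choose (k - 2) • ∑ i, ∑ j, g i j := by
  have hcount : ∀ i j, ∑ J ∈ powersetCard k univ, (if i ∈ J ∧ j ∈ J then g i j else 0) =
      (Fintype.card α - 2).choose (k - 2) • g i j := by
    intro i j
    obtain rfl | hij := eq_or_ne i j
    · simp [hg]
    · have hpair := card_filter_powersetCard_subset {i, j} univ k (subset_univ _)
        (by rw [card_pair hij]; exact hk)
      rw [card_pair hij, card_univ] at hpair
      rw [← sum_filter, sum_const]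
      simpa [insert_subset_iff] using congrArg (· • g i j) hpair
  calc ∑ J ∈ powersetCard k univ, ∑ i ∈ J, ∑ j ∈ J, g i j
      = ∑ J ∈ powersetCard k univ, ∑ i, ∑ j, if i ∈ J ∧ j ∈ J then g i j else 0 := by
        simp only [ite_and, ← ite_sum_zero, Fintype.sum_ite_mem]
    _ = ∑ i, ∑ j, ∑ J ∈ powersetCard k univ, if i ∈ J ∧ j ∈ J then g i j else 0 := by
        rw [sum_comm]
        exact sum_congr rfl fun i _ => sum_comm
    _ = _ := by simp only [hcount, ← smul_sum]

theorem Nat.cast_choose_sub_cast_choose_sub_two {n k : ℕ} (hk : 2 ≤ k) (hkn : k ≤ n) :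
    (n.choose k : ℝ) - (n - 2).choose (k - 2) =
      n.choose k * (1 - (k * (k - 1)) / (n * (n - 1))) := by
  have hid : (n.choose k : ℝ) * k.choose 2 = n.choose 2 * (n - 2).choose (k - 2) := by
    exact_mod_cast Nat.choose_mul hk
  rw [Nat.cast_choose_two, Nat.cast_choose_two] at hid
  have hn : (2 : ℝ) ≤ n := by exact_mod_cast hk.trans hkn
  have hn0 : (n : ℝ) ≠ 0 := by linarith
  have hn1 : (n : ℝ) - 1 ≠ 0 := by linarith
  field_simp
  linear_combination 2 * hid

theorem sum_foldl_ofFn_eq_pow_mul {X α R : Type*} [Fintype α] [CommSemiring R]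
    (step : X → α → X) (P : X → Prop) (hP : ∀ x a, P x → P (step x a)) (g : X → R) (c : R)
    (hg : ∀ x, P x → ∑ a, g (step x a) = c * g x) (t : ℕ) {x : X} (hx : P x) :
    ∑ ω : Fin t → α, g ((List.ofFn ω).foldl step x) = c ^ t * g x := by
  induction t generalizing x with
  | zero => simp
  | succ t ih =>
    rw [← (Fin.consEquiv fun _ => α).sum_comp, Fintype.sum_prod_type]
    simp only [Fin.consEquiv_apply, List.ofFn_succ, Fin.cons_zero, Fin.cons_succ,
      List.foldl_cons, ih (hP x _ hx), ← mul_sum, hg x hx]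
    ring

theorem Gamma_eq_re_trace_hadamard_inv {n : ℕ} {B : Matrix (Fin n) (Fin n) ℂ} (hB : B.PosDef) :
    Gamma B = (trace (B ⊙ B⁻¹)).re - n := by
  have hre : ∀ i, 0 < (B i i).re := fun i => (Complex.pos_iff.1 hB.diag_pos).1
  have hsq : ∀ i, (Real.sqrt (B i i).re : ℂ) * Real.sqrt (B i i).re = B i i := fun i => by
    rw [← Complex.ofReal_mul, Real.mul_self_sqrt (hre i).le]
    exact hB.isHermitian.coe_re_apply_self i
  have hD : IsUnit (sqrtDiag B).det := by
    rw [sqrtDiag, det_diagonal]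
    exact (prod_ne_zero_iff.2 fun i _ => Complex.ofReal_ne_zero.2
      (Real.sqrt_pos.2 (hre i)).ne').isUnit
  have hinv : (hatM B)⁻¹ = sqrtDiag B * B⁻¹ * sqrtDiag B := by
    rw [hatM, Matrix.mul_inv_rev, Matrix.mul_inv_rev, nonsing_inv_nonsing_inv _ hD, mul_assoc]
  rw [Gamma, hinv]
  congr 2
  refine sum_congr rfl fun i _ => ?_
  simp only [diag_apply, sqrtDiag, diagonal_mul, mul_diagonal, hadamard_apply]
  rw [mul_right_comm, hsq]

theorem Gamma_submatrix_equiv {n : ℕ} {ι : Type*} [Fintype ι] [DecidableEq ι]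
    (M : Matrix ι ι ℂ) (e : Fin n ≃ ι) (hM : M.PosDef) :
    Gamma (M.submatrix e e) = (trace (M ⊙ M⁻¹)).re - n := by
  rw [Gamma_eq_re_trace_hadamard_inv (hM.submatrix e.injective),
    trace_hadamard_inv_submatrix_equiv]

section Pivot

variable {n k : ℕ} (J : Finset (Fin n)) (hJ : J.card = k)

def pivotEquiv : Fin k ⊕ {a : Fin n // a ∉ J} ≃ Fin n :=
  ((J.orderIsoOfFin hJ).toEquiv.sumCongr (Equiv.refl _)).trans (Equiv.sumCompl (· ∈ J))

theorem subJ_eq_toBlocks₁₁ (B : Matrix (Fin n) (Fin n) ℂ) :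
    subJ J hJ B = (B.submatrix (pivotEquiv J hJ) (pivotEquiv J hJ)).toBlocks₁₁ := rfl

theorem embedJ_eq_submatrix_fromBlocks (S : Matrix (Fin k) (Fin k) ℂ) :
    embedJ J hJ S =
      (fromBlocks S 0 0 1).submatrix (pivotEquiv J hJ).symm (pivotEquiv J hJ).symm := by
  ext a b
  by_cases ha : a ∈ J <;> by_cases hb : b ∈ J <;>
    simp [embedJ, pivotEquiv, ha, hb, Equiv.sumCompl_symm_apply_of_pos,
      Equiv.sumCompl_symm_apply_of_neg, one_apply]
  rintro rfl
  exact ha hb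

theorem conj_inv_embedJ_inv_eq_submatrix {S : Matrix (Fin k) (Fin k) ℂ} (hS : IsUnit S.det)
    (B : Matrix (Fin n) (Fin n) ℂ) :
    ((embedJ J hJ S⁻¹)⁻¹)ᴴ * B * (embedJ J hJ S⁻¹)⁻¹ =
      ((fromBlocks S 0 0 1)ᴴ * B.submatrix (pivotEquiv J hJ) (pivotEquiv J hJ) *
        fromBlocks S 0 0 1).submatrix (pivotEquiv J hJ).symm (pivotEquiv J hJ).symm := by
  set e := pivotEquiv J hJ
  rw [embedJ_eq_submatrix_fromBlocks, inv_submatrix_equiv,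
    fromBlocks_one_inv (isUnit_nonsing_inv_det S hS), nonsing_inv_nonsing_inv S hS,
    conjTranspose_submatrix, ← submatrix_mul_equiv _ _ _ e.symm,
    ← submatrix_mul_equiv _ _ _ e.symm, submatrix_submatrix, e.self_comp_symm, submatrix_id_id]

theorem trace_subJ_mul_sub_trace_hadamard (A C : Matrix (Fin n) (Fin n) ℂ) :
    trace (subJ J hJ A * subJ J hJ C) - trace (subJ J hJ A ⊙ subJ J hJ C) =
      ∑ i ∈ J, ∑ j ∈ J, if i = j then 0 else A i j * C j i := by
  conv_rhs => rw [← J.map_orderEmbOfFin_univ hJ]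
  rw [trace_mul_sub_trace_hadamard]
  simp_rw [sum_map, RelEmbedding.coe_toEmbedding, (J.orderEmbOfFin hJ).injective.eq_iff]
  rfl

variable {J hJ} {B : Matrix (Fin n) (Fin n) ℂ} {S : Matrix (Fin k) (Fin k) ℂ}

theorem Matrix.PosDef.conj_inv_embedJ_inv (hB : B.PosDef) (hS : IsUnit S.det) :
    (((embedJ J hJ S⁻¹)⁻¹)ᴴ * B * (embedJ J hJ S⁻¹)⁻¹).PosDef := by
  rw [conj_inv_embedJ_inv_eq_submatrix J hJ hS]
  exact ((hB.submatrix (pivotEquiv J hJ).injective).conj_fromBlocks hS).submatrix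
    (pivotEquiv J hJ).symm.injective

theorem Gamma_conj_inv_embedJ_inv (hB : B.PosDef) (hS : IsUnit S.det)
    (hD : (Sᴴ * subJ J hJ B * S).IsDiag) :
    Gamma (((embedJ J hJ S⁻¹)⁻¹)ᴴ * B * (embedJ J hJ S⁻¹)⁻¹) =
      Gamma B + (∑ i ∈ J, ∑ j ∈ J, if i = j then 0 else B i j * B⁻¹ j i).re := by
  rw [subJ_eq_toBlocks₁₁] at hD
  have hM := hB.submatrix (pivotEquiv J hJ).injective
  rw [conj_inv_embedJ_inv_eq_submatrix J hJ hS,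
    Gamma_submatrix_equiv _ _ (hM.conj_fromBlocks hS), trace_hadamard_inv_conj_fromBlocks _ hS hD,
    trace_hadamard_inv_submatrix_equiv, inv_submatrix_equiv, ← subJ_eq_toBlocks₁₁,
    ← subJ_eq_toBlocks₁₁, trace_subJ_mul_sub_trace_hadamard, Gamma_eq_re_trace_hadamard_inv hB,
    Complex.add_re]
  ring

end Pivot

theorem sum_Gamma_update {n k : ℕ} (hk : 2 ≤ k)
    (update : Matrix (Fin n) (Fin n) ℂ → PivotSet n k → Matrix (Fin n) (Fin n) ℂ)
    {B : Matrix (Fin n) (Fin n) ℂ} (hB : B.PosDef)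
    (hupd : ∀ J : PivotSet n k, ∃ S : Matrix (Fin k) (Fin k) ℂ, IsUnit S.det ∧
      (Sᴴ * subJ J.1 J.2 B * S).IsDiag ∧
      update B J = ((embedJ J.1 J.2 S⁻¹)⁻¹)ᴴ * B * (embedJ J.1 J.2 S⁻¹)⁻¹) :
    ∑ J : PivotSet n k, Gamma (update B J) =
      ((n.choose k : ℝ) - (n - 2).choose (k - 2)) * Gamma B := by
  have hstep : ∀ J : PivotSet n k, Gamma (update B J) =
      Gamma B + (∑ i ∈ J.1, ∑ j ∈ J.1, if i = j then 0 else B i j * B⁻¹ j i).re := fun J => by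
    obtain ⟨S, hS, hD, hJ⟩ := hupd J
    rw [hJ, Gamma_conj_inv_embedJ_inv hB hS hD]
  have hpairs : ∑ J : PivotSet n k, ∑ i ∈ J.1, ∑ j ∈ J.1,
      (if i = j then 0 else B i j * B⁻¹ j i) =
        (n - 2).choose (k - 2) • (n - trace (B ⊙ B⁻¹)) := by
    rw [← sum_subtype (powersetCard k univ) (fun J => by simp [mem_powersetCard])
      fun J => ∑ i ∈ J, ∑ j ∈ J, (if i = j then 0 else B i j * B⁻¹ j i),
      sum_powersetCard_sum_sum hk _ (by simp), ← trace_mul_sub_trace_hadamard,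
      mul_nonsing_inv _ ((isUnit_iff_isUnit_det B).1 hB.isUnit)]
    simp
  rw [sum_congr rfl fun J _ => hstep J, sum_add_distrib, sum_const, card_univ,
    Fintype.card_finset_len, Fintype.card_fin, ← Complex.re_sum, hpairs,
    Gamma_eq_re_trace_hadamard_inv hB, Complex.smul_re, Complex.sub_re, Complex.natCast_re,
    nsmul_eq_mul, nsmul_eq_mul]
  ring

/-- global linear convergence in expectation: for the two-sided
generalized factorization algorithm with randomized size-`k` pivoting (driven by an
arbitrary fixed rule `update` which, on each positive definite input and pivot set `J`,
performs a congruence diagonalizing the `J × J` block),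
`E[Γ(B^{(t)})] = (1 − k(k−1)/(n(n−1)))^t · Γ(B^{(0)})`;
the expectation is the average over all pivot sequences `ω : Fin t → PivotSet n k`. -/
theorem gamma_linear_convergence {n k : ℕ} (hk : 2 ≤ k) (hkn : k ≤ n)
    (B : Matrix (Fin n) (Fin n) ℂ) (hB : B.PosDef)
    (update : Matrix (Fin n) (Fin n) ℂ → PivotSet n k → Matrix (Fin n) (Fin n) ℂ)
    (hupd : ∀ (B' : Matrix (Fin n) (Fin n) ℂ) (J : PivotSet n k), B'.PosDef →
      ∃ S : Matrix (Fin k) (Fin k) ℂ, IsUnit S.det ∧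
        (Sᴴ * subJ J.1 J.2 B' * S).IsDiag ∧
        update B' J = ((embedJ J.1 J.2 S⁻¹)⁻¹)ᴴ * B' * (embedJ J.1 J.2 S⁻¹)⁻¹)
    (t : ℕ) :
    (∑ ω : Fin t → PivotSet n k, Gamma ((List.ofFn ω).foldl update B)) /
        (Fintype.card (Fin t → PivotSet n k) : ℝ) =
      (1 - ((k : ℝ) * ((k : ℝ) - 1)) / ((n : ℝ) * ((n : ℝ) - 1))) ^ t * Gamma B := by
  have hpos : ∀ B' J, B'.PosDef → (update B' J).PosDef := fun B' J hB' => by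
    obtain ⟨S, hS, -, hJ⟩ := hupd B' J hB'
    exact hJ ▸ hB'.conj_inv_embedJ_inv hS
  have hmean : ∀ B', B'.PosDef → ∑ J, Gamma (update B' J) =
      (n.choose k * (1 - ((k : ℝ) * ((k : ℝ) - 1)) / ((n : ℝ) * ((n : ℝ) - 1)))) * Gamma B' :=
    fun B' hB' => by
      rw [sum_Gamma_update hk update hB' (hupd B' · hB'),
        Nat.cast_choose_sub_cast_choose_sub_two hk hkn]
  have hC : (n.choose k : ℝ) ≠ 0 := by exact_mod_cast (Nat.choose_pos hkn).ne'
  rw [sum_foldl_ofFn_eq_pow_mul update PosDef hpos Gamma _ hmean t hB, Fintype.card_fun,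
    Fintype.card_fin, Fintype.card_finset_len, Fintype.card_fin, Nat.cast_pow, mul_pow]
  field_simp
end
end

section
/- Let B ∈ ℂ^{n×n} be Hermitian, let i ≠ j be indices, and let U ∈ ℂ^{n×n} be a unitary matrix that agrees with the identity outside the {i,j}×{i,j} block and such that (U* B U)_{ij} = 0. Then off(U* B U) = off(B) − 2|b_{ij}|², where off(M) := Σ_{k≠ℓ} |m_{kℓ}|². -/
/-!
Unitary conjugation preserves the Frobenius norm `∑ k, ∑ l, ‖m k l‖ ^ 2`. Since `U` maps
`span(e_i, e_j)` into itself, the same holds for the `{i, j} × {i, j}` block, which gets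
conjugated by the compression of `U` to that block; and the diagonal entries outside `{i, j}`
do not move. So `off` loses exactly what the two diagonal entries `i, i` and `j, j` gain, and by
block invariance they gain `‖b i j‖ ^ 2 + ‖b j i‖ ^ 2 = 2 ‖b i j‖ ^ 2`, because both rotated
off-diagonal entries of the block vanish (the `j, i` one by Hermitian symmetry).
-/

open Matrix

noncomputable section

/-- `off(M) = Σ_{i ≠ j} |m_{ij}|²`, the squared Frobenius distance to the
nearest diagonal matrix. -/
def off {n : ℕ} (M : Matrix (Fin n) (Fin n) ℂ) : ℝ :=
  ∑ p ∈ (Finset.univ : Finset (Fin n)).offDiag, ‖M p.1 p.2‖ ^ 2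

open Finset

theorem sum_eq_sum_coe_sort_of_eq_zero {m β : Type*} [Fintype m] [AddCommMonoid β] {f : m → β}
    {S : Finset m} (hf : ∀ a ∉ S, f a = 0) :
    ∑ a, f a = ∑ a : S, f a := by
  rw [sum_coe_sort]
  exact (sum_subset (subset_univ S) fun a _ ha => hf a ha).symm

section

variable {𝕜 m n : Type*} [RCLike 𝕜] [Fintype m] [Fintype n]

theorem ofReal_sum_sum_norm_sq_eq_trace_mul_conjTranspose (M : Matrix m n 𝕜) :
    ((∑ k, ∑ l, ‖M k l‖ ^ 2 : ℝ) : 𝕜) = (M * Mᴴ).trace := by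
  simp only [trace, Matrix.diag, mul_apply, conjTranspose_apply, RCLike.star_def,
    RCLike.mul_conj]
  push_cast
  rfl

theorem sum_sum_norm_sq_conjTranspose_mul_mul [DecidableEq m] {V : Matrix m m 𝕜}
    (hV : Vᴴ * V = 1) (M : Matrix m m 𝕜) :
    ∑ k, ∑ l, ‖(Vᴴ * M * V) k l‖ ^ 2 = ∑ k, ∑ l, ‖M k l‖ ^ 2 := by
  have hV' : V * Vᴴ = 1 := mul_eq_one_comm.mp hV
  rw [← RCLike.ofReal_inj (K := 𝕜), ofReal_sum_sum_norm_sq_eq_trace_mul_conjTranspose,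
    ofReal_sum_sum_norm_sq_eq_trace_mul_conjTranspose, conjTranspose_mul, conjTranspose_mul,
    conjTranspose_conjTranspose]
  calc (Vᴴ * M * V * (Vᴴ * (Mᴴ * V))).trace = (Vᴴ * (M * Mᴴ) * V).trace := by
        simp only [Matrix.mul_assoc, ← Matrix.mul_assoc V Vᴴ, hV', Matrix.one_mul]
    _ = (M * Mᴴ).trace := by
        rw [trace_mul_cycle, ← Matrix.mul_assoc, hV', Matrix.one_mul]

theorem conjTranspose_mul_mul_apply_self_of_col_eq_single [DecidableEq m] {V : Matrix m m 𝕜}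
    {k : m} (hk : ∀ a, V a k = if a = k then 1 else 0) (M : Matrix m m 𝕜) :
    (Vᴴ * M * V) k k = M k k := by
  simp [mul_apply, conjTranspose_apply, hk]

variable {S : Finset m} {V : Matrix m m 𝕜}

theorem submatrix_conjTranspose_mul_mul_of_mapsTo (hVS : ∀ a k, a ∉ S → k ∈ S → V a k = 0)
    (M : Matrix m m 𝕜) :
    ((Vᴴ * M * V).submatrix (↑) (↑) : Matrix S S 𝕜) =
      (V.submatrix (↑) (↑) : Matrix S S 𝕜)ᴴ * M.submatrix (↑) (↑) * V.submatrix (↑) (↑) := by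
  ext p q
  simp only [submatrix_apply, mul_apply, conjTranspose_apply]
  rw [sum_eq_sum_coe_sort_of_eq_zero fun b hb => by rw [hVS b q hb q.2, mul_zero]]
  refine Fintype.sum_congr _ _ fun b => congrArg (· * _) ?_
  exact sum_eq_sum_coe_sort_of_eq_zero fun a ha => by rw [hVS a p ha p.2, star_zero, zero_mul]

theorem sum_sum_norm_sq_conjTranspose_mul_mul_of_mapsTo [DecidableEq m] (hV : Vᴴ * V = 1)
    (hVS : ∀ a k, a ∉ S → k ∈ S → V a k = 0) (M : Matrix m m 𝕜) :
    ∑ k ∈ S, ∑ l ∈ S, ‖(Vᴴ * M * V) k l‖ ^ 2 = ∑ k ∈ S, ∑ l ∈ S, ‖M k l‖ ^ 2 := by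
  have hV' : (V.submatrix (↑) (↑) : Matrix S S 𝕜)ᴴ * V.submatrix (↑) (↑) = 1 := by
    simpa [hV, submatrix_one _ Subtype.val_injective] using
      (submatrix_conjTranspose_mul_mul_of_mapsTo hVS 1).symm
  have := sum_sum_norm_sq_conjTranspose_mul_mul hV' (M.submatrix (↑) (↑))
  rw [← submatrix_conjTranspose_mul_mul_of_mapsTo hVS] at this
  simpa only [submatrix_apply, ← sum_coe_sort S] using this

end

theorem off_add_sum_norm_sq_diag {n : ℕ} (M : Matrix (Fin n) (Fin n) ℂ) :
    off M + ∑ k, ‖M k k‖ ^ 2 = ∑ k, ∑ l, ‖M k l‖ ^ 2 := by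
  rw [← sum_product', ← diag_union_offDiag, sum_union (disjoint_diag_offDiag _), sum_diag, off,
    add_comm]

/-- for Hermitian `B` and a unitary `U` agreeing with the identity
outside the `{i,j} × {i,j}` block and annihilating the `(i,j)` entry,
`off(U* B U) = off(B) − 2|b_{ij}|²`. -/
theorem off_jacobi_update {n : ℕ} (B U : Matrix (Fin n) (Fin n) ℂ)
    (hB : B.IsHermitian) (i j : Fin n) (hij : i ≠ j)
    (hU : Uᴴ * U = 1)
    (hUid : ∀ a b, ¬(a ∈ ({i, j} : Finset (Fin n)) ∧ b ∈ ({i, j} : Finset (Fin n))) →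
      U a b = if a = b then 1 else 0)
    (hzero : (Uᴴ * B * U) i j = 0) :
    off (Uᴴ * B * U) = off B - 2 * ‖B i j‖ ^ 2 := by
  set S : Finset (Fin n) := {i, j}
  have hUS : ∀ a k, a ∉ S → k ∈ S → U a k = 0 := fun a k ha hk => by
    rw [hUid a k fun h => ha h.1, if_neg (ne_of_mem_of_not_mem hk ha).symm]
  have hji : (Uᴴ * B * U) j i = 0 := by
    rw [← (isHermitian_conjTranspose_mul_mul U hB).apply, hzero, star_zero]
  have hBji : ‖B j i‖ = ‖B i j‖ := by rw [← hB.apply, norm_star]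
  have hblock := sum_sum_norm_sq_conjTranspose_mul_mul_of_mapsTo hU hUS B
  simp only [S, sum_pair hij, hzero, hji, hBji, norm_zero] at hblock
  have hdiag : ∑ k ∈ Sᶜ, ‖(Uᴴ * B * U) k k‖ ^ 2 = ∑ k ∈ Sᶜ, ‖B k k‖ ^ 2 :=
    sum_congr rfl fun k hk => by
      rw [conjTranspose_mul_mul_apply_self_of_col_eq_single fun a =>
        hUid a k fun h => mem_compl.1 hk h.2]
  have hfrob := sum_sum_norm_sq_conjTranspose_mul_mul hU B
  rw [← off_add_sum_norm_sq_diag, ← off_add_sum_norm_sq_diag, ← sum_add_sum_compl S,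
    ← sum_add_sum_compl S fun k => ‖B k k‖ ^ 2, hdiag] at hfrob
  simp only [S, sum_pair hij] at hfrob
  linarith
end
end

section
/- Let B ∈ ℂ^{n×n} be Hermitian (n ≥ 2). For each unordered pair {i,j} of distinct indices, let U_{ij} be a unitary matrix agreeing with the identity outside the {i,j}×{i,j} block such that (U_{ij}* B U_{ij})_{ij} = 0. If the pair {i,j} is sampled uniformly at random among all n(n−1)/2 unordered pairs, then E[off(U_{ij}* B U_{ij})] = (1 − 2/(n(n−1))) · off(B). -/
/-!
Write `off M = ‖M‖_F² - Σ_k |m_kk|²`. Conjugation by a unitary `U_{ij}` preserves `‖·‖_F²`,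
leaves the diagonal entries outside `{i, j}` unchanged, and acts on the principal `{i, j}`
block as conjugation by the unitary `2 × 2` block of `U_{ij}`, so it also preserves the
Frobenius mass of that block. Both off-diagonal entries of the new block vanish (the result is
Hermitian), so their mass `2|b_ij|²` moves to the diagonal: `off` drops by exactly `2|b_ij|²`.
Averaging over the `n(n-1)` ordered pairs, `Σ_{i≠j} |b_ij|² = off B` gives the claim.
-/

open Matrix
open scoped ComplexOrder

noncomputable section


open Finset

section Frobenius

variable {ι : Type*} [Fintype ι]

def frobeniusNormSq (M : Matrix ι ι ℂ) : ℝ :=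
  ∑ k, ∑ l, ‖M k l‖ ^ 2

lemma ofReal_frobeniusNormSq (M : Matrix ι ι ℂ) :
    (frobeniusNormSq M : ℂ) = (Mᴴ * M).trace := by
  simp only [frobeniusNormSq, trace, Matrix.diag, mul_apply, conjTranspose_apply,
    Complex.star_def, Complex.conj_mul']
  push_cast
  exact sum_comm

lemma frobeniusNormSq_conj_unitary [DecidableEq ι] {W : Matrix ι ι ℂ} (hW : Wᴴ * W = 1)
    (M : Matrix ι ι ℂ) : frobeniusNormSq (Wᴴ * M * W) = frobeniusNormSq M := by
  have hW' : W * Wᴴ = 1 := mul_eq_one_comm.mp hW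
  have hconj : (Wᴴ * M * W)ᴴ * (Wᴴ * M * W) = Wᴴ * (Mᴴ * M) * W := by
    simp only [conjTranspose_mul, conjTranspose_conjTranspose, Matrix.mul_assoc]
    rw [← Matrix.mul_assoc W, hW', Matrix.one_mul]
  apply Complex.ofReal_injective
  rw [ofReal_frobeniusNormSq, ofReal_frobeniusNormSq, hconj, trace_mul_cycle,
    ← Matrix.mul_assoc, hW', Matrix.one_mul]

end Frobenius

section Block

lemma sum_eq_sum_coe_of_notMem {ι α : Type*} [Fintype ι] [AddCommMonoid α] (S : Finset ι)
    {f : ι → α} (hf : ∀ p ∉ S, f p = 0) :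
    ∑ p, f p = ∑ p : S, f p := by
  rw [sum_coe_sort]
  exact (sum_subset (subset_univ S) fun p _ hp => hf p hp).symm

variable {ι : Type*} [Fintype ι] {S : Finset ι}

lemma submatrix_conjTranspose_mul_mul {W : Matrix ι ι ℂ}
    (hW : ∀ p k, k ∈ S → p ∉ S → W p k = 0) (M : Matrix ι ι ℂ) :
    (Wᴴ * M * W).submatrix (↑) (↑) =
      (W.submatrix (↑) (↑) : Matrix S S ℂ)ᴴ * M.submatrix (↑) (↑) * W.submatrix (↑) (↑) := by
  ext a b
  simp only [submatrix_apply, mul_apply, conjTranspose_apply]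
  rw [sum_eq_sum_coe_of_notMem S fun q hq => by simp [hW q b b.2 hq]]
  refine sum_congr rfl fun q _ => ?_
  rw [sum_eq_sum_coe_of_notMem S fun p hp => by simp [hW p a a.2 hp]]

lemma conjTranspose_mul_self_submatrix [DecidableEq ι] {W : Matrix ι ι ℂ}
    (hW : ∀ p k, k ∈ S → p ∉ S → W p k = 0) (hWu : Wᴴ * W = 1) :
    (W.submatrix (↑) (↑) : Matrix S S ℂ)ᴴ * W.submatrix (↑) (↑) = 1 := by
  have h := submatrix_conjTranspose_mul_mul hW 1
  rwa [Matrix.mul_one, hWu, submatrix_one _ Subtype.val_injective, Matrix.mul_one, eq_comm] at h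

lemma frobeniusNormSq_submatrix_conj [DecidableEq ι] {W : Matrix ι ι ℂ}
    (hW : ∀ p k, k ∈ S → p ∉ S → W p k = 0) (hWu : Wᴴ * W = 1) (M : Matrix ι ι ℂ) :
    frobeniusNormSq ((Wᴴ * M * W).submatrix ((↑) : S → ι) (↑)) =
      frobeniusNormSq (M.submatrix ((↑) : S → ι) (↑)) := by
  rw [submatrix_conjTranspose_mul_mul hW,
    frobeniusNormSq_conj_unitary (conjTranspose_mul_self_submatrix hW hWu)]

end Block

lemma frobeniusNormSq_submatrix_pair {ι : Type*} [DecidableEq ι] {i j : ι} (hij : i ≠ j)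
    (M : Matrix ι ι ℂ) :
    frobeniusNormSq (M.submatrix ((↑) : ({i, j} : Finset ι) → ι) (↑)) =
      ‖M i i‖ ^ 2 + ‖M i j‖ ^ 2 + ‖M j i‖ ^ 2 + ‖M j j‖ ^ 2 := by
  have hpair (f : ι → ℝ) : ∑ a : ({i, j} : Finset ι), f a = f i + f j := by
    rw [sum_coe_sort {i, j} f, sum_pair hij]
  simp only [frobeniusNormSq, submatrix_apply,
    hpair (fun a => ∑ b : ({i, j} : Finset ι), ‖M a b‖ ^ 2), hpair (fun b => ‖M i b‖ ^ 2),
    hpair (fun b => ‖M j b‖ ^ 2)]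
  ring

lemma conjTranspose_mul_mul_apply_self {ι : Type*} [Fintype ι] [DecidableEq ι]
    {W : Matrix ι ι ℂ} {k : ι} (hk : ∀ p, W p k = if p = k then 1 else 0) (M : Matrix ι ι ℂ) :
    (Wᴴ * M * W) k k = M k k := by
  simp [mul_apply, conjTranspose_apply, hk]

lemma off_eq_frobeniusNormSq_sub_diag {n : ℕ} (M : Matrix (Fin n) (Fin n) ℂ) :
    off M = frobeniusNormSq M - ∑ k, ‖M k k‖ ^ 2 := by
  rw [frobeniusNormSq, ← sum_product', ← diag_union_offDiag,
    sum_union (disjoint_diag_offDiag _), sum_diag, off]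
  ring

lemma off_conj_eq_sub_of_apply_eq_zero {n : ℕ} {i j : Fin n} (hij : i ≠ j)
    {B W : Matrix (Fin n) (Fin n) ℂ} (hB : B.IsHermitian) (hW : Wᴴ * W = 1)
    (hid : ∀ a b, ¬(a ∈ ({i, j} : Finset (Fin n)) ∧ b ∈ ({i, j} : Finset (Fin n))) →
      W a b = if a = b then (1 : ℂ) else 0)
    (hz : (Wᴴ * B * W) i j = 0) :
    off (Wᴴ * B * W) = off B - 2 * ‖B i j‖ ^ 2 := by
  set S : Finset (Fin n) := {i, j}
  have hzji : (Wᴴ * B * W) j i = 0 := by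
    rw [← (isHermitian_conjTranspose_mul_mul W hB).apply, hz, star_zero]
  have hBji : ‖B j i‖ = ‖B i j‖ := by rw [← hB.apply, norm_star]
  have hsupp : ∀ p k, k ∈ S → p ∉ S → W p k = 0 := fun p k hk hp => by
    rw [hid p k (by tauto), if_neg (by rintro rfl; exact hp hk)]
  have hblock := frobeniusNormSq_submatrix_conj hsupp hW B
  rw [frobeniusNormSq_submatrix_pair hij, frobeniusNormSq_submatrix_pair hij, hz, hzji] at hblock
  have hout : ∑ k ∈ Sᶜ, ‖(Wᴴ * B * W) k k‖ ^ 2 = ∑ k ∈ Sᶜ, ‖B k k‖ ^ 2 :=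
    sum_congr rfl fun k hk => by
      rw [conjTranspose_mul_mul_apply_self fun p => hid p k (by simp_all [S])]
  have hdiag (M : Matrix (Fin n) (Fin n) ℂ) :
      ∑ k, ‖M k k‖ ^ 2 = ∑ k ∈ Sᶜ, ‖M k k‖ ^ 2 + (‖M i i‖ ^ 2 + ‖M j j‖ ^ 2) := by
    rw [← sum_pair hij (f := fun k => ‖M k k‖ ^ 2), sum_compl_add_sum]
  rw [off_eq_frobeniusNormSq_sub_diag, off_eq_frobeniusNormSq_sub_diag,
    frobeniusNormSq_conj_unitary hW, hdiag, hdiag, hout]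
  rw [norm_zero, hBji] at hblock
  linarith

lemma card_offDiag_univ_fin (n : ℕ) :
    (#(univ : Finset (Fin n)).offDiag : ℝ) = n * (n - 1) := by
  rw [offDiag_card, card_univ, Fintype.card_fin, Nat.cast_sub (Nat.le_mul_self n)]
  push_cast
  ring

theorem expected_off_jacobi_update_general {n : ℕ}
    (B : Matrix (Fin n) (Fin n) ℂ) (hB : B.IsHermitian)
    (U : Fin n → Fin n → Matrix (Fin n) (Fin n) ℂ)
    (hunit : ∀ i j, i ≠ j → (U i j)ᴴ * (U i j) = 1)
    (hUid : ∀ i j, i ≠ j → ∀ a b,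
      ¬(a ∈ ({i, j} : Finset (Fin n)) ∧ b ∈ ({i, j} : Finset (Fin n))) →
      U i j a b = if a = b then (1 : ℂ) else 0)
    (hzero : ∀ i j, i ≠ j → ((U i j)ᴴ * B * (U i j)) i j = 0) :
    (∑ p ∈ (Finset.univ : Finset (Fin n)).offDiag, off ((U p.1 p.2)ᴴ * B * (U p.1 p.2))) /
        ((n : ℝ) * ((n : ℝ) - 1)) =
      (1 - 2 / ((n : ℝ) * ((n : ℝ) - 1))) * off B := by
  have hstep : ∀ p ∈ (univ : Finset (Fin n)).offDiag,
      off ((U p.1 p.2)ᴴ * B * (U p.1 p.2)) = off B - 2 * ‖B p.1 p.2‖ ^ 2 := fun p hp => by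
    have hne := (mem_offDiag.mp hp).2.2
    exact off_conj_eq_sub_of_apply_eq_zero hne hB (hunit _ _ hne) (hUid _ _ hne) (hzero _ _ hne)
  rw [sum_congr rfl hstep, sum_sub_distrib, sum_const, ← mul_sum, nsmul_eq_mul,
    card_offDiag_univ_fin]
  change (_ * off B - 2 * off B) / _ = _
  -- for `n ≤ 1` both sides are `0`: the division is by `0` and `off B` is an empty sum
  rcases eq_or_ne ((n : ℝ) * (n - 1)) 0 with hN | hN
  · have hoff : off B = 0 := by
      rw [← card_offDiag_univ_fin, Nat.cast_eq_zero, card_eq_zero] at hN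
      rw [off, hN, sum_empty]
    simp [hoff]
  · rw [one_sub_div hN]
    ring

/-- averaging over a uniformly random unordered pair `{i,j}` of distinct
indices, one Givens-type rotation zeroing the `(i,j)` entry gives
`E[off(U_{ij}* B U_{ij})] = (1 − 2/(n(n−1)))·off(B)`. -/
theorem expected_off_jacobi_update {n : ℕ} (hn : 2 ≤ n)
    (B : Matrix (Fin n) (Fin n) ℂ) (hB : B.IsHermitian)
    (U : Fin n → Fin n → Matrix (Fin n) (Fin n) ℂ)
    (hsym : ∀ i j, U i j = U j i)
    (hunit : ∀ i j, i ≠ j → (U i j)ᴴ * (U i j) = 1)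
    (hUid : ∀ i j, i ≠ j → ∀ a b,
      ¬(a ∈ ({i, j} : Finset (Fin n)) ∧ b ∈ ({i, j} : Finset (Fin n))) →
      U i j a b = if a = b then (1 : ℂ) else 0)
    (hzero : ∀ i j, i ≠ j → ((U i j)ᴴ * B * (U i j)) i j = 0) :
    (∑ p ∈ (Finset.univ : Finset (Fin n)).offDiag, off ((U p.1 p.2)ᴴ * B * (U p.1 p.2))) /
        ((n : ℝ) * ((n : ℝ) - 1)) =
      (1 - 2 / ((n : ℝ) * ((n : ℝ) - 1))) * off B :=
  expected_off_jacobi_update_general B hB U hunit hUid hzero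
end
end
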